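/- arXiv:1006.0792 — 10 statements merged into one kernel-verified Lean document; each statement's English description precedes it below -/
import Mathlib

section
/- Let β* = (√17 − 3)/2. For every r ∈ (0,1): ∫₀^r ((1−r)/(1−u))^{2+β*} (2/(1−u) − 2β*/(β*+2)) (u(1−u))^{β*} du = r^{1+β*}(1−r)^{β*}. -/
open intervalIntegral

/-!
With `c = 2β/(β+2)`, the integrand equals `(1-r)^{2+β} u^β (2 - c(1-u)) / (1-u)^3`. Precisely when
`c = 1 - β`, i.e. `β² + 3β - 2 = 0`, the factor `2 - c(1-u)` becomes `(1+β) + (1-β)u`, and then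
`u^β ((1+β) + (1-β)u) / (1-u)^3` is the derivative of `u^{1+β} / (1-u)^2`; evaluating this
antiderivative at `r` gives `(1-r)^{2+β} r^{1+β} / (1-r)^2 = r^{1+β} (1-r)^β`.
-/

lemma sqrt17_sub_three_div_two_nonneg : 0 ≤ (Real.sqrt 17 - 3) / 2 := by
  have : (3 : ℝ) ≤ Real.sqrt 17 := Real.le_sqrt_of_sq_le (by norm_num)
  linarith

lemma sqrt17_sub_three_div_two_root :
    2 * ((Real.sqrt 17 - 3) / 2) / ((Real.sqrt 17 - 3) / 2 + 2) = 1 - (Real.sqrt 17 - 3) / 2 := by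
  have h17 : Real.sqrt 17 ^ 2 = 17 := Real.sq_sqrt (by norm_num)
  have hpos : 0 < (Real.sqrt 17 - 3) / 2 + 2 := by linarith [sqrt17_sub_three_div_two_nonneg]
  rw [div_eq_iff hpos.ne']
  nlinarith

section

variable {β u : ℝ}

lemma hasDerivAt_rpow_one_add_div_one_sub_sq (hβ : 0 ≤ β) (hu₀ : 0 ≤ u) (hu₁ : u < 1) :
    HasDerivAt (fun x => x ^ (1 + β) / (1 - x) ^ 2)
      (u ^ β * ((1 + β) + (1 - β) * u) / (1 - u) ^ 3) u := by
  have hsub : 1 - u ≠ 0 := (sub_pos.2 hu₁).ne'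
  have hnum : HasDerivAt (fun x : ℝ => x ^ (1 + β)) ((1 + β) * u ^ β) u := by
    simpa using Real.hasDerivAt_rpow_const (x := u) (p := 1 + β) (Or.inr (by linarith))
  have hden : HasDerivAt (fun x : ℝ => (1 - x) ^ 2) (2 * (1 - u) ^ 1 * (-1)) u :=
    ((hasDerivAt_id u).const_sub 1).pow 2
  refine (hnum.div hden (pow_ne_zero 2 hsub)).congr_deriv ?_
  rw [Real.rpow_one_add' hu₀ (by linarith)]
  field_simp
  ring

lemma integral_rpow_mul_div_one_sub_cube (hβ : 0 ≤ β) {r : ℝ} (hr₀ : 0 ≤ r) (hr₁ : r < 1) :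
    ∫ u in (0 : ℝ)..r, u ^ β * ((1 + β) + (1 - β) * u) / (1 - u) ^ 3 = r ^ (1 + β) / (1 - r) ^ 2 := by
  have hIcc : ∀ u ∈ Set.uIcc 0 r, 0 ≤ u ∧ u < 1 := fun u hu => by
    rw [Set.uIcc_of_le hr₀] at hu
    exact ⟨hu.1, hu.2.trans_lt hr₁⟩
  have hcont : ContinuousOn (fun u : ℝ => u ^ β * ((1 + β) + (1 - β) * u) / (1 - u) ^ 3)
      (Set.uIcc 0 r) := by
    refine ContinuousOn.div (by fun_prop) (by fun_prop) fun u hu => ?_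
    exact pow_ne_zero 3 (sub_pos.2 (hIcc u hu).2).ne'
  rw [integral_eq_sub_of_hasDerivAt
    (fun u hu => hasDerivAt_rpow_one_add_div_one_sub_sq hβ (hIcc u hu).1 (hIcc u hu).2)
    hcont.intervalIntegrable]
  simp [Real.zero_rpow (by linarith : 1 + β ≠ 0)]

lemma first_kernel_integrand_eq {r : ℝ} (hr : r ≤ 1) (hu₀ : 0 ≤ u) (hu₁ : u < 1) :
    ((1 - r) / (1 - u)) ^ (2 + β) * (2 / (1 - u) - (1 - β)) * (u * (1 - u)) ^ β
      = (1 - r) ^ (2 + β) * (u ^ β * ((1 + β) + (1 - β) * u) / (1 - u) ^ 3) := by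
  have hu : 0 < 1 - u := sub_pos.2 hu₁
  have hsplit : (1 - u) ^ (2 + β) = (1 - u) ^ 2 * (1 - u) ^ β := by
    rw [Real.rpow_add hu, Real.rpow_two]
  rw [Real.div_rpow (sub_nonneg.2 hr) hu.le, Real.mul_rpow hu₀ hu.le, hsplit]
  have hpow : (1 - u) ^ β ≠ 0 := (Real.rpow_pos_of_pos hu β).ne'
  field_simp
  ring

theorem integral_first_kernel_eq (hβ : 0 ≤ β) {r : ℝ} (hr₀ : 0 ≤ r) (hr₁ : r < 1) :
    ∫ u in (0 : ℝ)..r, ((1 - r) / (1 - u)) ^ (2 + β) * (2 / (1 - u) - (1 - β)) * (u * (1 - u)) ^ β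
      = r ^ (1 + β) * (1 - r) ^ β := by
  have hr : 0 < 1 - r := sub_pos.2 hr₁
  rw [integral_congr fun u hu => first_kernel_integrand_eq hr₁.le (u := u) ?_ ?_,
    integral_const_mul, integral_rpow_mul_div_one_sub_cube hβ hr₀ hr₁,
    Real.rpow_add hr, Real.rpow_two]
  · field_simp
  all_goals
    rw [Set.uIcc_of_le hr₀] at hu
    linarith [hu.1, hu.2]

end

/-- `r ↦ (r(1−r))^{β*}` is reproduced by the first piece of the kernel `N`. -/
theorem fixed_point_first_integral :
    ∀ r ∈ Set.Ioo (0:ℝ) 1,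
      (∫ u in (0:ℝ)..r,
          ((1 - r) / (1 - u)) ^ (2 + (Real.sqrt 17 - 3) / 2) *
            (2 / (1 - u) - 2 * ((Real.sqrt 17 - 3) / 2) / ((Real.sqrt 17 - 3) / 2 + 2)) *
            (u * (1 - u)) ^ ((Real.sqrt 17 - 3) / 2))
        = r ^ (1 + (Real.sqrt 17 - 3) / 2) * (1 - r) ^ ((Real.sqrt 17 - 3) / 2) := by
  rintro r ⟨hr₀, hr₁⟩
  rw [sqrt17_sub_three_div_two_root]
  exact integral_first_kernel_eq sqrt17_sub_three_div_two_nonneg hr₀.le hr₁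
end

section
/- Let β* = (√17 − 3)/2. For every r ∈ (0,1): ∫_r^1 (r/u)^{2+β*} (2/u − 2β*/(β*+2)) (u(1−u))^{β*} du = r^{β*}(1−r)^{β*+1}. -/
open intervalIntegral Real Set

/-!
At `β = β*` we have `2β/(β+2) = 1 - β`, so the integrand is `r^{2+β} (1-u)^β (2 - (1-β)u) / u³`,
and for every `β ≥ 0` the factor `(1-u)^β (2 - (1-β)u) / u³` is the derivative of
`-(1-u)^{β+1} / u²`. Evaluating this antiderivative at `1` and at `r` gives
`r^{2+β} (1-r)^{β+1} / r² = r^β (1-r)^{β+1}`.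
-/

lemma hasDerivAt_neg_one_sub_rpow_div_sq {β u : ℝ} (hβ : 0 ≤ β) (hu0 : u ≠ 0) (hu1 : u ≤ 1) :
    HasDerivAt (fun v => -(1 - v) ^ (β + 1) / v ^ 2)
      ((1 - u) ^ β * (2 - (1 - β) * u) / u ^ 3) u := by
  have hpow : HasDerivAt (fun v => (1 - v) ^ (β + 1)) (-1 * (β + 1) * (1 - u) ^ β) u := by
    simpa only [add_sub_cancel_right] using
      ((hasDerivAt_id' u).const_sub 1).rpow_const (p := β + 1) (Or.inr (by linarith))
  refine (hpow.neg.div (hasDerivAt_pow 2 u) (pow_ne_zero 2 hu0)).congr_deriv ?_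
  simp only [Pi.neg_apply, rpow_add_one' (by linarith : (0:ℝ) ≤ 1 - u) (by linarith : β + 1 ≠ 0)]
  field_simp
  ring

lemma integral_one_sub_rpow_mul_div_cube {β r : ℝ} (hβ : 0 ≤ β) (hr0 : 0 < r) (hr1 : r ≤ 1) :
    ∫ u in r..1, (1 - u) ^ β * (2 - (1 - β) * u) / u ^ 3 = (1 - r) ^ (β + 1) / r ^ 2 := by
  have hIcc : ∀ u ∈ uIcc r 1, u ≠ 0 ∧ u ≤ 1 := fun u hu => by
    rw [uIcc_of_le hr1] at hu
    exact ⟨(hr0.trans_le hu.1).ne', hu.2⟩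
  rw [integral_eq_sub_of_hasDerivAt fun u hu =>
    hasDerivAt_neg_one_sub_rpow_div_sq hβ (hIcc u hu).1 (hIcc u hu).2]
  · simp [zero_rpow (by linarith : β + 1 ≠ 0), neg_div]
  · refine ContinuousOn.intervalIntegrable (.div (.mul ?_ (by fun_prop)) (by fun_prop)
      fun u hu => pow_ne_zero 3 (hIcc u hu).1)
    exact (continuousOn_const.sub continuousOn_id).rpow_const fun _ _ => Or.inr hβ

lemma div_rpow_two_add_mul_rpow_eq {β r u : ℝ} (hr : 0 ≤ r) (hu0 : 0 < u) (hu1 : u ≤ 1) :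
    (r / u) ^ (2 + β) * (2 / u - (1 - β)) * (u * (1 - u)) ^ β =
      r ^ (2 + β) * ((1 - u) ^ β * (2 - (1 - β) * u) / u ^ 3) := by
  rw [div_rpow hr hu0.le, mul_rpow hu0.le (by linarith), rpow_add hu0, rpow_two]
  have : 0 < u ^ β := rpow_pos_of_pos hu0 β
  field_simp

theorem integral_div_rpow_two_add_mul_rpow {β r : ℝ} (hβ : 0 ≤ β) (hr0 : 0 < r) (hr1 : r ≤ 1) :
    ∫ u in r..1, (r / u) ^ (2 + β) * (2 / u - (1 - β)) * (u * (1 - u)) ^ β =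
      r ^ β * (1 - r) ^ (β + 1) := by
  have hcongr : EqOn (fun u => (r / u) ^ (2 + β) * (2 / u - (1 - β)) * (u * (1 - u)) ^ β)
      (fun u => r ^ (2 + β) * ((1 - u) ^ β * (2 - (1 - β) * u) / u ^ 3)) (uIcc r 1) := by
    intro u hu
    rw [uIcc_of_le hr1] at hu
    exact div_rpow_two_add_mul_rpow_eq hr0.le (hr0.trans_le hu.1) hu.2
  rw [integral_congr hcongr, integral_const_mul, integral_one_sub_rpow_mul_div_cube hβ hr0 hr1,
    rpow_add hr0, rpow_two]
  field_simp

lemma two_mul_div_add_two_eq_one_sub {β : ℝ} (hroot : β ^ 2 + 3 * β - 2 = 0) :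
    2 * β / (β + 2) = 1 - β := by
  rw [div_eq_iff fun h => by nlinarith]
  linear_combination hroot

lemma sqrt_seventeen_sub_three_div_two_root :
    ((√17 - 3) / 2) ^ 2 + 3 * ((√17 - 3) / 2) - 2 = 0 := by
  linear_combination sq_sqrt (show (0:ℝ) ≤ 17 by norm_num) / 4

/-- `r ↦ (r(1−r))^{β*}` is reproduced by the second piece of the kernel `N`. -/
theorem fixed_point_second_integral :
    ∀ r ∈ Set.Ioo (0:ℝ) 1,
      (∫ u in r..(1:ℝ),
          (r / u) ^ (2 + (Real.sqrt 17 - 3) / 2) *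
            (2 / u - 2 * ((Real.sqrt 17 - 3) / 2) / ((Real.sqrt 17 - 3) / 2 + 2)) *
            (u * (1 - u)) ^ ((Real.sqrt 17 - 3) / 2))
        = r ^ ((Real.sqrt 17 - 3) / 2) * (1 - r) ^ ((Real.sqrt 17 - 3) / 2 + 1) := by
  intro r ⟨hr0, hr1⟩
  have hβ : 0 ≤ (√17 - 3) / 2 := by
    have : 3 ≤ √17 := le_sqrt_of_sq_le (by norm_num)
    linarith
  rw [two_mul_div_add_two_eq_one_sub sqrt_seventeen_sub_three_div_two_root]
  exact integral_div_rpow_two_add_mul_rpow hβ hr0 hr1.le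
end

section
/- Let β* = (√17−3)/2 and for r, u ∈ (0,1) define g_r(u) = 1_{0<u<r} ((1−r)/(1−u))^{2+β*} (2/(1−u) − 2β*/(β*+2)) + 1_{r≤u<1} (r/u)^{2+β*} (2/u − 2β*/(β*+2)). Then for every u ∈ (0,1), ∫₀¹ g_r(u) dr = 1. -/
open intervalIntegral

/-- The kernel `g_r(u)` of the integral operator `N` from the first-moment
equation, with `β* = (√17−3)/2`. -/
noncomputable def kernelG (r u : ℝ) : ℝ :=
  (if 0 < u ∧ u < r then
      ((1 - r) / (1 - u)) ^ (2 + (Real.sqrt 17 - 3) / 2) *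
        (2 / (1 - u) - 2 * ((Real.sqrt 17 - 3) / 2) / ((Real.sqrt 17 - 3) / 2 + 2))
    else 0)
  + (if r ≤ u ∧ u < 1 then
      (r / u) ^ (2 + (Real.sqrt 17 - 3) / 2) *
        (2 / u - 2 * ((Real.sqrt 17 - 3) / 2) / ((Real.sqrt 17 - 3) / 2 + 2))
    else 0)

/-!
With `p = 2 + β*` and `K = 2β*/(β*+2)`, the kernel is `(r/u)^p (2/u - K)` for `r < u` and
`((1-r)/(1-u))^p (2/(1-u) - K)` for `r > u`. Since `∫₀ᵘ (r/u)^p dr = u/(p+1)` and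
`∫ᵤ¹ ((1-r)/(1-u))^p dr = (1-u)/(p+1)`, the integral equals `(4 - K)/(3 + β*)`, and this is `1`
exactly because `1 - K = β*`, which is the quadratic equation `β*² + 3β* - 2 = 0`.
-/

open Set

noncomputable def betaStar : ℝ := (Real.sqrt 17 - 3) / 2

theorem betaStar_sq_add_three_mul_sub_two : betaStar ^ 2 + 3 * betaStar - 2 = 0 := by
  have h17 : Real.sqrt 17 ^ 2 = 17 := Real.sq_sqrt (by norm_num)
  unfold betaStar
  linear_combination h17 / 4

theorem one_sub_two_mul_div_add_two {β : ℝ} (hβ : β ^ 2 + 3 * β - 2 = 0) :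
    1 - 2 * β / (β + 2) = β := by
  have hβ2 : β + 2 ≠ 0 := by
    intro h
    rw [eq_neg_of_add_eq_zero_left h] at hβ
    norm_num at hβ
  field_simp
  linear_combination -hβ

theorem integral_div_rpow {a p : ℝ} (ha : 0 < a) (hp : -1 < p) :
    ∫ r in (0:ℝ)..a, (r / a) ^ p = a / (p + 1) := by
  have hp1 : p + 1 ≠ 0 := by linarith
  calc ∫ r in (0:ℝ)..a, (r / a) ^ p = ∫ r in (0:ℝ)..a, r ^ p / a ^ p :=
        integral_congr_Ioo_of_le ha.le fun r hr => Real.div_rpow hr.1.le ha.le p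
    _ = a / (p + 1) := by
        rw [integral_div, integral_rpow (Or.inl hp), Real.zero_rpow hp1, Real.rpow_add ha,
          Real.rpow_one]
        field_simp
        ring

theorem intervalIntegrable_div_rpow {a p : ℝ} (ha : 0 < a) (hp : -1 < p) :
    IntervalIntegrable (fun r => (r / a) ^ p) MeasureTheory.volume 0 a :=
  ((intervalIntegrable_rpow' hp).div_const (a ^ p)).congr_uIoo fun r hr => by
    rw [uIoo_of_le ha.le] at hr
    exact (Real.div_rpow hr.1.le ha.le p).symm

theorem integral_sub_div_rpow {a b p : ℝ} (hab : a < b) (hp : -1 < p) :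
    ∫ r in a..b, ((b - r) / (b - a)) ^ p = (b - a) / (p + 1) := by
  rw [integral_comp_sub_left (fun x => (x / (b - a)) ^ p), sub_self,
    integral_div_rpow (sub_pos.2 hab) hp]

theorem intervalIntegrable_sub_div_rpow {a b p : ℝ} (hab : a < b) (hp : -1 < p) :
    IntervalIntegrable (fun r => ((b - r) / (b - a)) ^ p) MeasureTheory.volume a b := by
  have := (intervalIntegrable_div_rpow (sub_pos.2 hab) hp).comp_sub_left b
  simp only [sub_zero, sub_sub_cancel] at this
  exact this.symm

theorem kernelG_of_le {r u : ℝ} (hru : r ≤ u) (hu : u < 1) :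
    kernelG r u = (r / u) ^ (2 + betaStar) * (2 / u - 2 * betaStar / (betaStar + 2)) := by
  have hleft : ¬ (0 < u ∧ u < r) := fun h => h.2.not_ge hru
  simp only [kernelG, if_neg hleft, if_pos (And.intro hru hu), zero_add]
  rfl

theorem kernelG_of_lt {r u : ℝ} (hu : 0 < u) (hur : u < r) :
    kernelG r u = ((1 - r) / (1 - u)) ^ (2 + betaStar) *
      (2 / (1 - u) - 2 * betaStar / (betaStar + 2)) := by
  have hright : ¬ (r ≤ u ∧ u < 1) := fun h => h.1.not_gt hur
  simp only [kernelG, if_pos (And.intro hu hur), if_neg hright, add_zero]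
  rfl

/-- For every `u ∈ (0,1)`, `∫₀¹ g_r(u) dr = 1`. -/
theorem kernelG_integral_eq_one :
    ∀ u ∈ Set.Ioo (0:ℝ) 1, (∫ r in (0:ℝ)..1, kernelG r u) = 1 := by
  rintro u ⟨hu0, hu1⟩
  set β := betaStar
  set K := 2 * β / (β + 2)
  have hp : -1 < 2 + β := by
    have : 0 ≤ Real.sqrt 17 := Real.sqrt_nonneg 17
    simp only [β, betaStar]
    linarith
  have hleft : EqOn (fun r => (r / u) ^ (2 + β) * (2 / u - K)) (kernelG · u) (Ioo 0 u) :=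
    fun r hr => (kernelG_of_le hr.2.le hu1).symm
  have hright : EqOn (fun r => ((1 - r) / (1 - u)) ^ (2 + β) * (2 / (1 - u) - K))
      (kernelG · u) (Ioo u 1) :=
    fun r hr => (kernelG_of_lt hu0 hr.1).symm
  have hleft_int : IntervalIntegrable (kernelG · u) MeasureTheory.volume 0 u :=
    ((intervalIntegrable_div_rpow hu0 hp).mul_const _).congr_uIoo (uIoo_of_le hu0.le ▸ hleft)
  have hright_int : IntervalIntegrable (kernelG · u) MeasureTheory.volume u 1 :=
    ((intervalIntegrable_sub_div_rpow hu1 hp).mul_const _).congr_uIoo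
      (uIoo_of_le hu1.le ▸ hright)
  rw [← integral_add_adjacent_intervals hleft_int hright_int,
    ← integral_congr_Ioo_of_le hu0.le hleft, ← integral_congr_Ioo_of_le hu1.le hright,
    integral_mul_const, integral_mul_const, integral_div_rpow hu0 hp,
    integral_sub_div_rpow hu1 hp]
  have hK : 1 - K = β := one_sub_two_mul_div_add_two betaStar_sq_add_three_mul_sub_two
  have hu1' : 1 - u ≠ 0 := by linarith
  have hp1 : 2 + β + 1 ≠ 0 := by linarith
  field_simp
  linear_combination hK
end

section
/- For r ∈ (0,1) and any nonnegative measurable f on [0,1]², one has 2∬_{[0,1]²} 1_{u₁<u₂<r} f((r−(u₂−u₁))/(1−(u₂−u₁))) du₁ du₂ = 2(1−r)² ∫₀^r f(r₁) r₁/(1−r₁)³ dr₁. -/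
open MeasureTheory Set
open scoped ENNReal

/-! Write `Y₁ = φ (U₂ - U₁)` with `φ = moebiusFlip r`. After the shear
`(u₁, t) ↦ (u₁, u₁ + t)` and Fubini, the gap `t = u₂ - u₁` on the triangle `0 ≤ u₁ < u₂ < r`
has density `r - t` on `(0, r)`. The map `φ` is an involution of `(0, r)` with
`|φ' t| = (1 - r) / (1 - t) ^ 2`, and the substitution `x = φ t` turns
`(1 - r) ^ 2 * x / (1 - x) ^ 3 dx` into `(r - t) dt`. -/

theorem setLIntegral_triangle_comp_sub (r : ℝ) {g : ℝ → ℝ≥0∞} (hg : Measurable g) :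
    ∫⁻ q in {q : ℝ × ℝ | 0 ≤ q.1 ∧ q.1 < q.2 ∧ q.2 < r}, g (q.2 - q.1)
      = ∫⁻ t in Ioo 0 r, ENNReal.ofReal (r - t) * g t := by
  set S := {q : ℝ × ℝ | 0 ≤ q.1 ∧ q.1 < q.2 ∧ q.2 < r}
  have hS : MeasurableSet S := by measurability
  have hF : Measurable (S.indicator fun q : ℝ × ℝ => g (q.2 - q.1)) := by
    refine Measurable.indicator ?_ hS
    fun_prop
  have fiber : ∀ t, ∫⁻ u, S.indicator (fun q => g (q.2 - q.1)) (u, u + t)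
      = (Ioo 0 r).indicator (fun t => ENNReal.ofReal (r - t) * g t) t := by
    intro t
    by_cases ht : t ∈ Ioo 0 r
    · have hslice : (fun u => S.indicator (fun q => g (q.2 - q.1)) (u, u + t))
          = (Ico 0 (r - t)).indicator (fun _ => g t) := by
        ext u
        have := ht.1
        simp only [indicator_apply, S, mem_ofPred_eq, mem_Ico, add_sub_cancel_left]
        exact if_congr (by constructor <;> grind) rfl rfl
      rw [hslice, lintegral_indicator measurableSet_Ico, setLIntegral_const, Real.volume_Ico,
        sub_zero, indicator_of_mem ht, mul_comm]
    · have hslice (u : ℝ) : (u, u + t) ∉ S := fun ⟨h₀, h₁, h₂⟩ =>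
        ht ⟨by linarith, by linarith⟩
      simp [indicator_of_notMem ht, indicator_of_notMem (hslice _)]
  have hshear := measurePreserving_prod_add_swap (volume : Measure ℝ) volume
  rw [← lintegral_indicator hS, ← lintegral_indicator measurableSet_Ioo, Measure.volume_eq_prod,
    ← hshear.lintegral_comp hF, lintegral_prod _ ?_]
  · exact lintegral_congr fiber
  · exact (hF.comp hshear.measurable).aemeasurable

noncomputable def moebiusFlip (r t : ℝ) : ℝ := (r - t) / (1 - t)

section moebiusFlip

variable {r t : ℝ}

lemma one_sub_moebiusFlip (ht : t ≠ 1) : 1 - moebiusFlip r t = (1 - r) / (1 - t) := by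
  have : 1 - t ≠ 0 := sub_ne_zero.mpr (Ne.symm ht)
  unfold moebiusFlip
  field_simp
  ring

lemma moebiusFlip_moebiusFlip (hr : r ≠ 1) (ht : t ≠ 1) :
    moebiusFlip r (moebiusFlip r t) = t := by
  have h₁ : 1 - t ≠ 0 := sub_ne_zero.mpr (Ne.symm ht)
  have h₂ : 1 - r ≠ 0 := sub_ne_zero.mpr (Ne.symm hr)
  have h₃ := one_sub_moebiusFlip (r := r) ht
  rw [moebiusFlip, h₃, moebiusFlip]
  field_simp
  ring

lemma mapsTo_moebiusFlip_Ioo (hr : r < 1) : MapsTo (moebiusFlip r) (Ioo 0 r) (Ioo 0 r) := by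
  rintro t ⟨ht₀, htr⟩
  have h : 0 < 1 - t := by linarith
  refine ⟨div_pos (by linarith) h, ?_⟩
  rw [moebiusFlip, div_lt_iff₀ h]
  nlinarith

lemma bijOn_moebiusFlip_Ioo (hr : r < 1) : BijOn (moebiusFlip r) (Ioo 0 r) (Ioo 0 r) := by
  have hinv : LeftInvOn (moebiusFlip r) (moebiusFlip r) (Ioo 0 r) := fun t ht =>
    moebiusFlip_moebiusFlip hr.ne (by linarith [ht.2] : t ≠ 1)
  exact InvOn.bijOn ⟨hinv, hinv⟩ (mapsTo_moebiusFlip_Ioo hr) (mapsTo_moebiusFlip_Ioo hr)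

lemma hasDerivAt_moebiusFlip (ht : t ≠ 1) :
    HasDerivAt (moebiusFlip r) ((r - 1) / (1 - t) ^ 2) t := by
  have h : 1 - t ≠ 0 := sub_ne_zero.mpr (Ne.symm ht)
  refine (((hasDerivAt_id t).const_sub r).div ((hasDerivAt_id t).const_sub 1) h).congr_deriv ?_
  simp only [id]
  ring

lemma lintegral_Ioo_eq_lintegral_comp_moebiusFlip (hr : r < 1) (g : ℝ → ℝ≥0∞) :
    ∫⁻ x in Ioo 0 r, g x
      = ∫⁻ t in Ioo 0 r, ENNReal.ofReal ((1 - r) / (1 - t) ^ 2) * g (moebiusFlip r t) := by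
  have hderiv : ∀ t ∈ Ioo 0 r,
      HasDerivWithinAt (moebiusFlip r) ((r - 1) / (1 - t) ^ 2) (Ioo 0 r) t := fun t ht =>
    (hasDerivAt_moebiusFlip (by linarith [ht.2])).hasDerivWithinAt
  conv_lhs => rw [← (bijOn_moebiusFlip_Ioo hr).image_eq]
  rw [lintegral_image_eq_lintegral_abs_deriv_mul measurableSet_Ioo hderiv
    (bijOn_moebiusFlip_Ioo hr).injOn]
  refine setLIntegral_congr_fun measurableSet_Ioo fun t ht => ?_
  rw [abs_div, abs_of_nonpos (by linarith), abs_of_nonneg (by positivity), neg_sub]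

lemma lintegral_density_eq_lintegral_comp_moebiusFlip (hr : r < 1) (g : ℝ → ℝ≥0∞) :
    ENNReal.ofReal ((1 - r) ^ 2) * ∫⁻ x in Ioo 0 r, g x * ENNReal.ofReal (x / (1 - x) ^ 3)
      = ∫⁻ t in Ioo 0 r, ENNReal.ofReal (r - t) * g (moebiusFlip r t) := by
  rw [lintegral_Ioo_eq_lintegral_comp_moebiusFlip hr,
    ← lintegral_const_mul' _ _ ENNReal.ofReal_ne_top]
  refine setLIntegral_congr_fun measurableSet_Ioo fun t ⟨ht₀, htr⟩ => ?_
  have h₁ : 0 < 1 - t := by linarith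
  have h₂ : 0 < 1 - r := by linarith
  have hjac : (1 - r) ^ 2 * ((1 - r) / (1 - t) ^ 2) * (moebiusFlip r t / (1 - moebiusFlip r t) ^ 3)
      = r - t := by
    rw [one_sub_moebiusFlip (htr.trans hr).ne, moebiusFlip]
    field_simp
  rw [← hjac, ENNReal.ofReal_mul (by positivity), ENNReal.ofReal_mul (by positivity)]
  ring

end moebiusFlip

/-- Density of `Y₁ = (r − (U₂−U₁))/(1 − (U₂−U₁))` on the event `{U₁ < U₂ < r}`,
for any nonnegative measurable `f`. -/
theorem density_Y1_below
    (r : ℝ) (hr : r ∈ Set.Ioo (0:ℝ) 1) (f : ℝ → ENNReal) (hf : Measurable f) :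
    2 * (∫⁻ u in Set.Icc (0:ℝ) 1 ×ˢ Set.Icc (0:ℝ) 1,
        Set.indicator {q : ℝ × ℝ | q.1 < q.2 ∧ q.2 < r}
          (fun q => f ((r - (q.2 - q.1)) / (1 - (q.2 - q.1)))) u)
      = ENNReal.ofReal (2 * (1 - r) ^ 2) *
        ∫⁻ x in Set.Ioo (0:ℝ) r, f x * ENNReal.ofReal (x / (1 - x) ^ 3) := by
  have hE : MeasurableSet {q : ℝ × ℝ | q.1 < q.2 ∧ q.2 < r} := by measurability
  have hregion : {q : ℝ × ℝ | q.1 < q.2 ∧ q.2 < r} ∩ Icc 0 1 ×ˢ Icc 0 1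
      = {q | 0 ≤ q.1 ∧ q.1 < q.2 ∧ q.2 < r} := by
    ext q
    simp only [mem_inter_iff, mem_ofPred_eq, mem_prod, mem_Icc]
    have := hr.2
    grind
  have hfφ : Measurable fun t => f (moebiusFlip r t) := by
    unfold moebiusFlip
    fun_prop
  rw [lintegral_indicator hE, Measure.restrict_restrict hE, hregion,
    ENNReal.ofReal_mul zero_le_two, ENNReal.ofReal_ofNat, mul_assoc,
    lintegral_density_eq_lintegral_comp_moebiusFlip hr.2]
  exact congrArg (2 * ·) (setLIntegral_triangle_comp_sub r hfφ)
end

section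
/- For r ∈ (0,1) and any nonnegative measurable f on [0,1], one has 2∬ 1_{r<u₁<u₂<1} f(r/(1−(u₂−u₁))) du₁ du₂ = 2r² ∫_r^1 f(r₁)(1−r₁)/r₁³ dr₁. -/
open MeasureTheory Set

lemma lintegral_image_abs_deriv {s : Set ℝ} {φ φ' : ℝ → ℝ}
    (hs : MeasurableSet s) (hφ' : ∀ x ∈ s, HasDerivWithinAt φ (φ' x) s x)
    (hφ : Set.InjOn φ s) (g : ℝ → ENNReal) :
    ∫⁻ x in φ '' s, g x = ∫⁻ x in s, ENNReal.ofReal |φ' x| * g (φ x) := by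
  simpa only [ContinuousLinearMap.det_toSpanSingleton] using
    lintegral_image_eq_lintegral_abs_det_fderiv_mul volume hs
      (fun x hx => (hφ' x hx).hasFDerivWithinAt) hφ g

-- Step E: swap lemma
lemma swap_step (r : ℝ) (hr : r ∈ Set.Ioo (0:ℝ) 1) (f : ℝ → ENNReal) (hf : Measurable f) :
    ∫⁻ u₂ in Ioo r 1, ∫⁻ w in Ioo (1+r-u₂) 1, f (r/w)
      = ∫⁻ w in Ioo r 1, ENNReal.ofReal (w - r) * f (r/w) := by
  obtain ⟨hr0, hr1⟩ := hr
  set A : Set (ℝ × ℝ) := {p : ℝ × ℝ | r < p.1 ∧ p.1 < 1 ∧ 1+r-p.1 < p.2 ∧ p.2 < 1} with hA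
  have hAm : MeasurableSet A := by
    apply MeasurableSet.inter (measurableSet_lt measurable_const measurable_fst)
    apply MeasurableSet.inter (measurableSet_lt measurable_fst measurable_const)
    exact (measurableSet_lt (measurable_const.sub measurable_fst) measurable_snd).inter
      (measurableSet_lt measurable_snd measurable_const)
  have hGm : Measurable fun p : ℝ × ℝ => A.indicator (fun p : ℝ × ℝ => f (r / p.2)) p :=
    (hf.comp (measurable_const.div measurable_snd)).indicator hAm
  have key1 : ∫⁻ u₂ in Ioo r 1, ∫⁻ w in Ioo (1+r-u₂) 1, f (r/w)
      = ∫⁻ p : ℝ × ℝ, A.indicator (fun p : ℝ × ℝ => f (r / p.2)) p := by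
    rw [Measure.volume_eq_prod, lintegral_prod _ hGm.aemeasurable,
      ← lintegral_indicator measurableSet_Ioo _]
    congr 1
    funext u₂
    by_cases hu : u₂ ∈ Ioo r 1
    · rw [indicator_of_mem hu, ← lintegral_indicator measurableSet_Ioo _]
      congr 1
      funext w
      by_cases hw : w ∈ Ioo (1+r-u₂) 1
      · rw [indicator_of_mem hw, indicator_of_mem]
        exact ⟨hu.1, hu.2, hw.1, hw.2⟩
      · rw [indicator_of_notMem hw, indicator_of_notMem]
        intro h
        exact hw ⟨h.2.2.1, h.2.2.2⟩
    · rw [indicator_of_notMem hu]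
      have h0 : ∀ y, A.indicator (fun p : ℝ × ℝ => f (r / p.2)) (u₂, y) = 0 := fun y =>
        indicator_of_notMem (fun h => hu ⟨h.1, h.2.1⟩) _
      simp [h0]
  have key2 : (∫⁻ p : ℝ × ℝ, A.indicator (fun p : ℝ × ℝ => f (r / p.2)) p)
      = ∫⁻ w in Ioo r 1, ENNReal.ofReal (w - r) * f (r/w) := by
    rw [Measure.volume_eq_prod, lintegral_prod_symm _ hGm.aemeasurable,
      ← lintegral_indicator measurableSet_Ioo _]
    congr 1
    funext w
    by_cases hw : w ∈ Ioo r 1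
    · rw [indicator_of_mem hw]
      have hpt : ∀ u₂, A.indicator (fun p : ℝ × ℝ => f (r/p.2)) (u₂, w)
          = (Ioo (1+r-w) 1).indicator (fun _ => f (r/w)) u₂ := by
        intro u₂
        by_cases hu : u₂ ∈ Ioo (1+r-w) 1
        · rw [indicator_of_mem hu, indicator_of_mem]
          exact ⟨by linarith [hu.1, hw.2], hu.2, by linarith [hu.1], hw.2⟩
        · rw [indicator_of_notMem hu, indicator_of_notMem]
          intro h
          exact hu ⟨by linarith [h.2.2.1], h.2.1⟩
      simp_rw [hpt]
      rw [lintegral_indicator measurableSet_Ioo _, setLIntegral_const, Real.volume_Ioo,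
        mul_comm]
      congr 2
      ring
    · rw [indicator_of_notMem hw]
      have h0 : ∀ u₂, A.indicator (fun p : ℝ × ℝ => f (r / p.2)) (u₂, w) = 0 := fun u₂ =>
        indicator_of_notMem (fun h => hw ⟨by linarith [h.2.2.1, h.2.1], h.2.2.2⟩) _
      simp [h0]
  rw [key1, key2]

/-- Density of `Y₁ = r/M`, `M = 1 − (U₂−U₁)`, on the event `{r < U₁ < U₂}`,
for any nonnegative measurable `f`. -/
theorem density_Y1_above
    (r : ℝ) (hr : r ∈ Set.Ioo (0:ℝ) 1) (f : ℝ → ENNReal) (hf : Measurable f) :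
    2 * (∫⁻ u in Set.Icc (0:ℝ) 1 ×ˢ Set.Icc (0:ℝ) 1,
        Set.indicator {q : ℝ × ℝ | r < q.1 ∧ q.1 < q.2 ∧ q.2 < 1}
          (fun q => f (r / (1 - (q.2 - q.1)))) u)
      = ENNReal.ofReal (2 * r ^ 2) *
        ∫⁻ x in Set.Ioo r 1, f x * ENNReal.ofReal ((1 - x) / x ^ 3) := by
  obtain ⟨hr0, hr1⟩ := hr
  set T : Set (ℝ × ℝ) := {q : ℝ × ℝ | r < q.1 ∧ q.1 < q.2 ∧ q.2 < 1} with hTdef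
  have hTm : MeasurableSet T := by
    apply MeasurableSet.inter (measurableSet_lt measurable_const measurable_fst)
    exact (measurableSet_lt measurable_fst measurable_snd).inter
      (measurableSet_lt measurable_snd measurable_const)
  set F : ℝ × ℝ → ENNReal := fun q => f (r / (1 - (q.2 - q.1))) with hFdef
  have hFm : Measurable F :=
    hf.comp (measurable_const.div (measurable_const.sub (measurable_snd.sub measurable_fst)))
  have stepA : (∫⁻ u in Set.Icc (0:ℝ) 1 ×ˢ Set.Icc (0:ℝ) 1, T.indicator F u)
      = ∫⁻ u, T.indicator F u := by
    rw [← lintegral_indicator (measurableSet_Icc.prod measurableSet_Icc) _,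
      indicator_indicator, inter_eq_self_of_subset_right]
    rintro ⟨u₁, u₂⟩ ⟨h1, h2, h3⟩
    exact ⟨⟨le_of_lt (lt_trans hr0 h1), le_of_lt (lt_trans h2 h3)⟩,
      ⟨le_of_lt (lt_trans hr0 (lt_trans h1 h2)), le_of_lt h3⟩⟩
  have inner : ∀ u₂ : ℝ, (∫⁻ u₁, T.indicator F (u₁, u₂))
      = (Ioo r 1).indicator (fun v => ∫⁻ w in Ioo (1+r-v) 1, f (r/w)) u₂ := by
    intro u₂
    by_cases hu : u₂ ∈ Ioo r 1
    · rw [indicator_of_mem hu]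
      have hpt : ∀ u₁, T.indicator F (u₁, u₂)
          = (Ioo r u₂).indicator (fun u₁ => f (r/(1-(u₂-u₁)))) u₁ := by
        intro u₁
        by_cases h1 : u₁ ∈ Ioo r u₂
        · have hmem : (u₁, u₂) ∈ T := ⟨h1.1, h1.2, hu.2⟩
          rw [indicator_of_mem h1]
          exact indicator_of_mem hmem F
        · rw [indicator_of_notMem h1, indicator_of_notMem (fun h => h1 ⟨h.1, h.2.1⟩)]
      simp_rw [hpt]
      rw [lintegral_indicator measurableSet_Ioo _]
      have himg : (fun w => w + (u₂ - 1)) '' Ioo (1+r-u₂) 1 = Ioo r u₂ := by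
        rw [image_add_const_Ioo]
        congr 1 <;> ring
      have hcv := lintegral_image_abs_deriv (s := Ioo (1+r-u₂) 1) (φ := fun w => w + (u₂-1)) (φ' := fun _ => 1)
        measurableSet_Ioo (fun x _ => (hasDerivWithinAt_id x _).add_const _)
        (fun a _ b _ h => by dsimp at h; linarith)
        (fun u₁ => f (r/(1-(u₂-u₁))))
      rw [himg] at hcv
      rw [hcv]
      refine setLIntegral_congr_fun measurableSet_Ioo
        (fun w hw => ?_)
      have hww : 1 - (u₂ - (w + (u₂ - 1))) = w := by ring
      rw [hww]
      simp
    · rw [indicator_of_notMem hu]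
      have h0 : ∀ u₁, T.indicator F (u₁, u₂) = 0 := fun u₁ =>
        indicator_of_notMem (fun h => hu ⟨lt_trans h.1 h.2.1, h.2.2⟩) _
      simp [h0]
  have stepB : (∫⁻ u, T.indicator F u)
      = ∫⁻ u₂ in Ioo r 1, ∫⁻ w in Ioo (1+r-u₂) 1, f (r/w) := by
    rw [Measure.volume_eq_prod, lintegral_prod_symm _ (hFm.indicator hTm).aemeasurable]
    simp_rw [inner]
    rw [lintegral_indicator measurableSet_Ioo _]
  have stepE := swap_step r ⟨hr0, hr1⟩ f hf
  -- final change of variables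
  have himg : (fun x => r / x) '' Ioo r 1 = Ioo r 1 := by
    ext y
    simp only [mem_image, mem_Ioo]
    constructor
    · rintro ⟨x, ⟨hx1, hx2⟩, rfl⟩
      have hx0 : 0 < x := lt_trans hr0 hx1
      exact ⟨by rw [lt_div_iff₀ hx0]; nlinarith, by rw [div_lt_one hx0]; exact hx1⟩
    · rintro ⟨hy1, hy2⟩
      have hy0 : 0 < y := lt_trans hr0 hy1
      refine ⟨r/y, ⟨by rw [lt_div_iff₀ hy0]; nlinarith, by rw [div_lt_one hy0]; exact hy1⟩, ?_⟩
      field_simp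
  have hderiv : ∀ x ∈ Ioo r 1, HasDerivWithinAt (fun x => r / x) (-(r/x^2)) (Ioo r 1) x := by
    intro x hx
    have hx0 : x ≠ 0 := ne_of_gt (lt_trans hr0 hx.1)
    have h := ((hasDerivAt_inv hx0).const_mul r).hasDerivWithinAt (s := Ioo r 1)
    have h2 : r * -(x^2)⁻¹ = -(r/x^2) := by field_simp
    rw [h2] at h
    simpa [div_eq_mul_inv] using h
  have hinj : Set.InjOn (fun x => r / x) (Ioo r 1) := by
    intro a ha b hb h
    dsimp at h
    have ha0 : a ≠ 0 := ne_of_gt (lt_trans hr0 ha.1)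
    have hb0 : b ≠ 0 := ne_of_gt (lt_trans hr0 hb.1)
    rw [div_eq_div_iff ha0 hb0] at h
    exact mul_left_cancel₀ (ne_of_gt hr0) (by linarith)
  have stepF := lintegral_image_abs_deriv measurableSet_Ioo hderiv hinj
    (fun w => ENNReal.ofReal (w - r) * f (r/w))
  rw [himg] at stepF
  have stepG : (∫⁻ x in Ioo r 1, ENNReal.ofReal |(-(r/x^2))| *
        (ENNReal.ofReal (r/x - r) * f (r/(r/x))))
      = ∫⁻ x in Ioo r 1, ENNReal.ofReal (r^2) * (f x * ENNReal.ofReal ((1 - x) / x ^ 3)) := by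
    refine setLIntegral_congr_fun measurableSet_Ioo
      (fun x hx => ?_)
    have hx0 : 0 < x := lt_trans hr0 hx.1
    have hxx : r / (r / x) = x := by field_simp
    rw [hxx, abs_neg, abs_of_pos (by positivity : (0:ℝ) < r/x^2), ← mul_assoc,
      ← ENNReal.ofReal_mul (by positivity : (0:ℝ) ≤ r/x^2)]
    have hval : r/x^2 * (r/x - r) = r^2 * ((1-x)/x^3) := by field_simp
    rw [hval, ENNReal.ofReal_mul (by positivity : (0:ℝ) ≤ r^2), mul_assoc, mul_comm (f x)]
  have hg : Measurable fun x : ℝ => f x * ENNReal.ofReal ((1 - x) / x ^ 3) := by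
    apply hf.mul
    exact ENNReal.measurable_ofReal.comp
      ((measurable_const.sub measurable_id).div (measurable_id.pow_const 3))
  rw [stepA, stepB, stepE, stepF, stepG, lintegral_const_mul _ hg, ← mul_assoc]
  congr 1
  rw [ENNReal.ofReal_mul (by norm_num : (0:ℝ) ≤ 2)]
  norm_num
end

section
/- Let (Xₙ) be the Markov chain on positive integers with q_{k,ℓ} = 1/(k+1)·1_{1≤ℓ≤k+1}, started at X₀ = 4, and let T = inf{n ≥ 0 : Xₙ ≤ 3}. Then for every n ≥ 0, 2ⁿ P(T > n) ≤ 1. -/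
/-!
If `Xₙ = k ≥ 3`, then `E[(Xₙ₊₁ - 2) 1{Xₙ₊₁ ≥ 4} | ℱₙ] = (k + 1)⁻¹ ∑_{ℓ=4}^{k+1} (ℓ - 2)`,
which is `(k - 2) / 2`. Hence `gₙ = E[(Xₙ - 2); T > n]` halves at every step, so `gₙ = 2 / 2ⁿ`
(in other words `2ⁿ (Xₙ - 2) 1{T > n}` has constant expectation). Since `Xₙ - 2 ≥ 2` on
`{T > n}`, `2 P(T > n) ≤ gₙ = 2 / 2ⁿ`.
-/

open MeasureTheory Finset

section DiscreteCondExp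

variable {Ω : Type*} {m mΩ : MeasurableSpace Ω} {μ : Measure Ω} [IsFiniteMeasure μ]
  {Y : Ω → ℕ}

lemma measure_eq_zero_of_condExp_ite_ae_eq_zero (hm : m ≤ mΩ) (hY : Measurable Y) {ℓ : ℕ}
    (h : μ[fun ω => if Y ω = ℓ then (1 : ℝ) else 0 | m] =ᵐ[μ] 0) :
    μ {ω | Y ω = ℓ} = 0 := by
  have hind : (fun ω => if Y ω = ℓ then (1 : ℝ) else 0) = {ω | Y ω = ℓ}.indicator 1 := by
    ext ω; simp [Set.indicator_apply]
  rw [← measureReal_eq_zero_iff,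
    ← integral_indicator_one (s := {ω | Y ω = ℓ}) (hY (measurableSet_singleton ℓ)), ← hind,
    ← integral_condExp hm, integral_congr_ae h, Pi.zero_def, integral_zero]

lemma ae_le_of_condExp_ite_ae_eq_zero (hm : m ≤ mΩ) (hY : Measurable Y) {B : ℕ}
    (h : ∀ ℓ, B < ℓ → μ[fun ω => if Y ω = ℓ then (1 : ℝ) else 0 | m] =ᵐ[μ] 0) :
    ∀ᵐ ω ∂μ, Y ω ≤ B := by
  have hne : ∀ᵐ ω ∂μ, ∀ ℓ, B < ℓ → Y ω ≠ ℓ := by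
    refine ae_all_iff.2 fun ℓ => ?_
    by_cases hℓ : B < ℓ
    · filter_upwards [measure_eq_zero_iff_ae_notMem.1
        (measure_eq_zero_of_condExp_ite_ae_eq_zero hm hY (h ℓ hℓ))] with ω hω _ using hω
    · exact ae_of_all _ fun _ h' => absurd h' hℓ
  filter_upwards [hne] with ω hω
  by_contra hlt
  exact hω _ (not_le.1 hlt) rfl

lemma setIntegral_comp_eq_of_condExp_ite (hm : m ≤ mΩ) (hY : Measurable Y) {q : ℕ → Ω → ℝ}
    (hq : ∀ ℓ, μ[fun ω => if Y ω = ℓ then (1 : ℝ) else 0 | m] =ᵐ[μ] q ℓ) {S : Finset ℕ}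
    (hYS : ∀ᵐ ω ∂μ, Y ω ∈ S) (f : ℕ → ℝ) {s : Set Ω} (hs : MeasurableSet[m] s) :
    ∫ ω in s, f (Y ω) ∂μ = ∫ ω in s, ∑ ℓ ∈ S, f ℓ * q ℓ ω ∂μ := by
  have hint : ∀ ℓ, Integrable (fun ω => if Y ω = ℓ then (1 : ℝ) else 0) μ := fun ℓ =>
    .of_bound ((measurable_of_countable fun k : ℕ => if k = ℓ then (1 : ℝ) else 0).comp
      hY).aestronglyMeasurable 1 (ae_of_all _ fun ω => by split_ifs <;> simp)
  have hqint : ∀ ℓ, Integrable (q ℓ) μ := fun ℓ => integrable_condExp.congr (hq ℓ)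
  calc ∫ ω in s, f (Y ω) ∂μ = ∫ ω in s, ∑ ℓ ∈ S, f ℓ * (if Y ω = ℓ then 1 else 0) ∂μ := by
        refine setIntegral_congr_ae (hm s hs) ?_
        filter_upwards [hYS] with ω hω _
        simp [hω]
    _ = ∑ ℓ ∈ S, f ℓ * ∫ ω in s, q ℓ ω ∂μ := by
        rw [integral_finsetSum _ fun ℓ _ => ((hint ℓ).const_mul _).integrableOn]
        refine sum_congr rfl fun ℓ _ => ?_
        rw [integral_const_mul, ← setIntegral_condExp hm (hint ℓ) hs,
          setIntegral_congr_ae (hm s hs) ((hq ℓ).mono fun ω h _ => h)]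
    _ = ∫ ω in s, ∑ ℓ ∈ S, f ℓ * q ℓ ω ∂μ := by
        rw [integral_finsetSum _ fun ℓ _ => ((hqint ℓ).const_mul _).integrableOn]
        simp_rw [integral_const_mul]

end DiscreteCondExp

noncomputable def uniformStepKernel (k ℓ : ℕ) : ℝ :=
  if 1 ≤ ℓ ∧ ℓ ≤ k + 1 then 1 / (k + 1 : ℝ) else 0

lemma uniformStepKernel_eq_zero_of_lt {k ℓ : ℕ} (h : k + 1 < ℓ) : uniformStepKernel k ℓ = 0 :=
  if_neg fun h' => by omega

noncomputable def survivingExcess (ℓ : ℕ) : ℝ :=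
  if 4 ≤ ℓ then (ℓ : ℝ) - 2 else 0

lemma sum_range_survivingExcess {k : ℕ} (hk : 3 ≤ k) :
    ∑ ℓ ∈ range (k + 2), survivingExcess ℓ = ((k : ℝ) - 2) * (k + 1) / 2 := by
  induction k, hk using Nat.le_induction with
  | base => norm_num [sum_range_succ, survivingExcess]
  | succ k hk ih =>
    rw [sum_range_succ, ih, survivingExcess, if_pos (by omega)]
    push_cast; ring

lemma sum_survivingExcess_mul_uniformStepKernel {k N : ℕ} (hk : 3 ≤ k) (hN : k + 2 ≤ N) :
    ∑ ℓ ∈ range N, survivingExcess ℓ * uniformStepKernel k ℓ = ((k : ℝ) - 2) / 2 := by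
  rw [← sum_subset (range_subset_range.2 hN) fun ℓ _ hℓ => by
    rw [uniformStepKernel_eq_zero_of_lt (by simp only [mem_range] at hℓ; omega), mul_zero]]
  have hterm : ∀ ℓ ∈ range (k + 2),
      survivingExcess ℓ * uniformStepKernel k ℓ = survivingExcess ℓ / (k + 1) := by
    intro ℓ hℓ
    simp only [mem_range] at hℓ
    by_cases h4 : 4 ≤ ℓ
    · rw [uniformStepKernel, if_pos (by omega), mul_one_div]
    · simp [survivingExcess, h4]
  rw [sum_congr rfl hterm, ← sum_div, sum_range_survivingExcess hk]
  field_simp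

section UniformChain

variable {Ω : Type*} {mΩ : MeasurableSpace Ω} {μ : Measure Ω} {ℱ : Filtration ℕ mΩ}
  {X : ℕ → Ω → ℕ}

def HasUniformStepKernel (μ : Measure Ω) (ℱ : Filtration ℕ mΩ) (X : ℕ → Ω → ℕ) : Prop :=
  ∀ n ℓ, μ[fun ω => if X (n + 1) ω = ℓ then (1 : ℝ) else 0 | ℱ n]
    =ᵐ[μ] fun ω => uniformStepKernel (X n ω) ℓ

def survivalSet (X : ℕ → Ω → ℕ) (n : ℕ) : Set Ω := {ω | ∀ k ≤ n, 4 ≤ X k ω}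

lemma measurableSet_survivalSet (hadapted : ∀ n, Measurable[ℱ n] (X n)) (n : ℕ) :
    MeasurableSet[ℱ n] (survivalSet X n) := by
  simp only [survivalSet, Set.ofPred_forall]
  exact .iInter fun k => .iInter fun hk =>
    (hadapted k).mono (ℱ.mono hk) le_rfl measurableSet_Ici

lemma survivalSet_succ (n : ℕ) :
    survivalSet X (n + 1) = survivalSet X n ∩ {ω | 4 ≤ X (n + 1) ω} := by
  ext ω
  simp only [survivalSet, Set.mem_inter_iff, Set.mem_ofPred_eq]
  refine ⟨fun h => ⟨fun k hk => h k (by omega), h _ le_rfl⟩, fun ⟨h, h'⟩ k hk => ?_⟩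
  rcases Nat.le_succ_iff.1 hk with hk | rfl
  exacts [h k hk, h']

section FiniteMeasure

variable [IsFiniteMeasure μ]

lemma HasUniformStepKernel.ae_succ_le (hkernel : HasUniformStepKernel μ ℱ X)
    (hadapted : ∀ n, Measurable[ℱ n] (X n))
    {n B : ℕ} (hB : ∀ᵐ ω ∂μ, X n ω ≤ B) : ∀ᵐ ω ∂μ, X (n + 1) ω ≤ B + 1 :=
  ae_le_of_condExp_ite_ae_eq_zero (ℱ.le n) ((hadapted _).mono (ℱ.le _) le_rfl) fun ℓ hℓ =>
    (hkernel n ℓ).trans <| hB.mono fun _ hω => uniformStepKernel_eq_zero_of_lt (by omega)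

lemma HasUniformStepKernel.ae_le_add (hkernel : HasUniformStepKernel μ ℱ X)
    (hadapted : ∀ n, Measurable[ℱ n] (X n))
    {c : ℕ} (hstart : ∀ ω, X 0 ω ≤ c) (n : ℕ) : ∀ᵐ ω ∂μ, X n ω ≤ c + n := by
  induction n with
  | zero => exact ae_of_all _ hstart
  | succ n ih => exact hkernel.ae_succ_le hadapted ih

lemma HasUniformStepKernel.setIntegral_survivalSet_succ (hkernel : HasUniformStepKernel μ ℱ X)
    (hadapted : ∀ n, Measurable[ℱ n] (X n))
    {n B : ℕ} (hB : ∀ᵐ ω ∂μ, X n ω ≤ B) :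
    ∫ ω in survivalSet X (n + 1), ((X (n + 1) ω : ℝ) - 2) ∂μ
      = (∫ ω in survivalSet X n, ((X n ω : ℝ) - 2) ∂μ) / 2 := by
  have hY : Measurable (X (n + 1)) := (hadapted _).mono (ℱ.le _) le_rfl
  have hA := measurableSet_survivalSet hadapted n
  have hS : ∀ᵐ ω ∂μ, X (n + 1) ω ∈ range (B + 2) :=
    (hkernel.ae_succ_le hadapted hB).mono fun _ h => mem_range.2 (by omega)
  calc ∫ ω in survivalSet X (n + 1), ((X (n + 1) ω : ℝ) - 2) ∂μ
      = ∫ ω in survivalSet X n, survivingExcess (X (n + 1) ω) ∂μ := by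
        rw [survivalSet_succ, ← setIntegral_indicator (measurableSet_le measurable_const hY)]
        congr with ω
        simp [survivingExcess, Set.indicator_apply]
    _ = ∫ ω in survivalSet X n,
          ∑ ℓ ∈ range (B + 2), survivingExcess ℓ * uniformStepKernel (X n ω) ℓ ∂μ :=
        setIntegral_comp_eq_of_condExp_ite (ℱ.le n) hY
          (q := fun ℓ ω => uniformStepKernel (X n ω) ℓ) (hkernel n) hS survivingExcess hA
    _ = ∫ ω in survivalSet X n, ((X n ω : ℝ) - 2) / 2 ∂μ := by
        refine setIntegral_congr_ae (ℱ.le n _ hA) ?_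
        filter_upwards [hB] with ω hω hωA
        exact sum_survivingExcess_mul_uniformStepKernel (by have := hωA n le_rfl; omega) (by omega)
    _ = (∫ ω in survivalSet X n, ((X n ω : ℝ) - 2) ∂μ) / 2 := integral_div _ _

lemma two_mul_measureReal_survivalSet_le (hadapted : ∀ n, Measurable[ℱ n] (X n))
    {n B : ℕ} (hB : ∀ᵐ ω ∂μ, X n ω ≤ B) :
    2 * μ.real (survivalSet X n) ≤ ∫ ω in survivalSet X n, ((X n ω : ℝ) - 2) ∂μ := by
  have hA := ℱ.le n _ (measurableSet_survivalSet hadapted n)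
  have hX : Measurable fun ω => (X n ω : ℝ) - 2 :=
    (measurable_of_countable fun k : ℕ => (k : ℝ) - 2).comp ((hadapted n).mono (ℱ.le n) le_rfl)
  have hint : Integrable (fun ω => (X n ω : ℝ) - 2) μ :=
    .of_bound hX.aestronglyMeasurable (B + 2) <| hB.mono fun ω hω => by
      rw [Real.norm_eq_abs, abs_le]
      constructor <;> linarith [(Nat.cast_le (α := ℝ)).2 hω, (X n ω).cast_nonneg (α := ℝ)]
  calc 2 * μ.real (survivalSet X n) = ∫ _ in survivalSet X n, (2 : ℝ) ∂μ := by
        rw [setIntegral_const, smul_eq_mul, mul_comm]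
    _ ≤ ∫ ω in survivalSet X n, ((X n ω : ℝ) - 2) ∂μ :=
        setIntegral_mono_on (integrableOn_const ..) hint.integrableOn hA fun ω hω => by
          have : (4 : ℝ) ≤ X n ω := by exact_mod_cast hω n le_rfl
          linarith

end FiniteMeasure

lemma HasUniformStepKernel.setIntegral_survivalSet_eq [IsProbabilityMeasure μ]
    (hkernel : HasUniformStepKernel μ ℱ X) (hadapted : ∀ n, Measurable[ℱ n] (X n))
    (hstart : ∀ ω, X 0 ω = 4) (n : ℕ) :
    ∫ ω in survivalSet X n, ((X n ω : ℝ) - 2) ∂μ = 2 / 2 ^ n := by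
  induction n with
  | zero =>
    have hA : survivalSet X 0 = Set.univ :=
      Set.eq_univ_of_forall fun ω k hk => by rw [Nat.le_zero.1 hk, hstart]
    norm_num [hA, hstart]
  | succ n ih =>
    rw [hkernel.setIntegral_survivalSet_succ hadapted
      (hkernel.ae_le_add hadapted (fun ω => (hstart ω).le) n), ih, pow_succ]
    ring

end UniformChain

theorem survival_probability_bound_general
    {Ω : Type*} {mΩ : MeasurableSpace Ω} (μ : Measure Ω) [IsProbabilityMeasure μ]
    (ℱ : Filtration ℕ mΩ) (X : ℕ → Ω → ℕ)
    (hadapted : ∀ n, Measurable[ℱ n] (X n))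
    (hstart : ∀ ω, X 0 ω = 4)
    (hkernel : ∀ n : ℕ, ∀ ℓ : ℕ,
      (μ[(fun ω => if X (n + 1) ω = ℓ then (1:ℝ) else 0) | ℱ n])
        =ᵐ[μ] fun ω => if 1 ≤ ℓ ∧ ℓ ≤ X n ω + 1 then 1 / (X n ω + 1 : ℝ) else 0) :
    ∀ n : ℕ, (2:ℝ) ^ n * (μ {ω | ∀ k ≤ n, 4 ≤ X k ω}).toReal ≤ 1 := by
  intro n
  have hstep : HasUniformStepKernel μ ℱ X := hkernel
  have hmass := two_mul_measureReal_survivalSet_le hadapted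
    (hstep.ae_le_add hadapted (fun ω => (hstart ω).le) n)
  rw [hstep.setIntegral_survivalSet_eq hadapted hstart n, le_div_iff₀ (by positivity)] at hmass
  change (2 : ℝ) ^ n * μ.real (survivalSet X n) ≤ 1
  linarith

/-- For the Markov chain with `X_{n+1}` uniform on `{1,…,X_n+1}` started at
`X₀ = 4`, with `T = inf{n : X_n ≤ 3}`, one has `2ⁿ P(T > n) ≤ 1`, i.e.
`2ⁿ P(∀ k ≤ n, X_k ≥ 4) ≤ 1`. -/
theorem survival_probability_bound
    {Ω : Type*} {mΩ : MeasurableSpace Ω} (μ : Measure Ω) [IsProbabilityMeasure μ]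
    (ℱ : Filtration ℕ mΩ) (X : ℕ → Ω → ℕ)
    (hadapted : ∀ n, Measurable[ℱ n] (X n))
    (hpos : ∀ n ω, 1 ≤ X n ω)
    (hstart : ∀ ω, X 0 ω = 4)
    (hkernel : ∀ n : ℕ, ∀ ℓ : ℕ,
      (μ[(fun ω => if X (n + 1) ω = ℓ then (1:ℝ) else 0) | ℱ n])
        =ᵐ[μ] fun ω => if 1 ≤ ℓ ∧ ℓ ≤ X n ω + 1 then 1 / (X n ω + 1 : ℝ) else 0) :
    ∀ n : ℕ, (2:ℝ) ^ n * (μ {ω | ∀ k ≤ n, 4 ≤ X k ω}).toReal ≤ 1 :=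
  survival_probability_bound_general μ ℱ X hadapted hstart hkernel
end

section
/- Let h: (0,1) → ℝ be h(r) = (8/π)√(r(1−r)). Then h satisfies (4/3) h(r) = ∫₀^r ((1−r)/(1−u))² · 2h(u)/(1−u) du + ∫_r^1 (r/u)² · 2h(u)/u du for every r ∈ (0,1). -/
/-! Both kernels are explicitly integrable: `(u / (1 - u)) ^ (3/2)` has derivative
`(3/2) √(u(1-u)) / (1-u)^3`, and the reflection `u ↦ 1 - u` turns the second integral into the
first. With `S = √r`, `T = √(1-r)` the right-hand side becomes `(32/3π) · S T (S² + T²)`,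
and `S² + T² = 1`. -/

open intervalIntegral Real Set

lemma hasDerivAt_sqrt_pow_three_div_sqrt_one_sub_pow_three {x : ℝ} (hx0 : 0 < x) (hx1 : x < 1) :
    HasDerivAt (fun u => √u ^ 3 / √(1 - u) ^ 3) (3 / 2 * (√(x * (1 - x)) / (1 - x) ^ 3)) x := by
  have h1x : 0 < 1 - x := sub_pos.2 hx1
  have hS : 0 < √x := sqrt_pos.2 hx0
  have hT : 0 < √(1 - x) := sqrt_pos.2 h1x
  have hnum : HasDerivAt (fun u => √u ^ 3) (3 * √x ^ 2 * (1 / (2 * √x))) x :=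
    (hasDerivAt_sqrt hx0.ne').pow 3
  have hden : HasDerivAt (fun u => √(1 - u) ^ 3) (3 * √(1 - x) ^ 2 * (1 / (2 * √(1 - x)) * -1)) x :=
    ((hasDerivAt_sqrt h1x.ne').comp x ((hasDerivAt_id x).const_sub 1)).pow 3
  refine (hnum.div hden (by positivity)).congr_deriv ?_
  rw [sqrt_mul hx0.le]
  set S := √x
  set T := √(1 - x)
  have hS2 : S ^ 2 = x := sq_sqrt hx0.le
  have hT2 : T ^ 2 = 1 - x := sq_sqrt h1x.le
  rw [← hT2]
  field_simp
  linear_combination hS2 + hT2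

lemma integral_sqrt_mul_one_sub_div_one_sub_pow_three {r : ℝ} (hr0 : 0 ≤ r) (hr1 : r < 1) :
    ∫ u in (0:ℝ)..r, √(u * (1 - u)) / (1 - u) ^ 3 = 2 / 3 * (√r ^ 3 / √(1 - r) ^ 3) := by
  have hne : ∀ u ∈ Icc 0 r, (1 - u) ^ 3 ≠ 0 := fun u hu => pow_ne_zero 3 (by linarith [hu.2])
  have hF : ContinuousOn (fun u => 2 / 3 * (√u ^ 3 / √(1 - u) ^ 3)) (Icc 0 r) :=
    continuousOn_const.mul <| (by fun_prop : Continuous fun u => √u ^ 3).continuousOn.div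
      (by fun_prop) fun u hu => pow_ne_zero 3 (sqrt_pos.2 (by linarith [hu.2])).ne'
  have hf : IntervalIntegrable (fun u => √(u * (1 - u)) / (1 - u) ^ 3) MeasureTheory.volume 0 r := by
    refine ContinuousOn.intervalIntegrable ?_
    rw [uIcc_of_le hr0]
    exact (by fun_prop : Continuous fun u => √(u * (1 - u))).continuousOn.div (by fun_prop) hne
  rw [integral_eq_sub_of_hasDerivAt_of_le hr0 hF (fun x hx => ?_) hf]
  · simp
  refine ((hasDerivAt_sqrt_pow_three_div_sqrt_one_sub_pow_three hx.1 (hx.2.trans hr1)).const_mul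
      (2 / 3 : ℝ)).congr_deriv ?_
  ring

lemma integral_sqrt_mul_one_sub_div_pow_three {r : ℝ} (hr0 : 0 < r) (hr1 : r ≤ 1) :
    ∫ u in r..1, √(u * (1 - u)) / u ^ 3 = 2 / 3 * (√(1 - r) ^ 3 / √r ^ 3) := by
  have h := integral_comp_sub_left (a := r) (b := 1) (fun v => √(v * (1 - v)) / (1 - v) ^ 3) 1
  rw [sub_self, integral_sqrt_mul_one_sub_div_one_sub_pow_three (by linarith) (by linarith),
    sub_sub_cancel] at h
  rw [← h]
  simp only [sub_sub_cancel, mul_comm]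

/-- The function `h(r) = (8/π)√(r(1−r))` solves the first-moment integral
equation of the homogeneous (`α = 0`) recursive lamination model. -/
theorem h_solves_integral_equation :
    ∀ r ∈ Set.Ioo (0:ℝ) 1,
      (4 / 3) * ((8 / Real.pi) * Real.sqrt (r * (1 - r)))
        = (∫ u in (0:ℝ)..r,
            ((1 - r) / (1 - u)) ^ 2 *
              (2 * ((8 / Real.pi) * Real.sqrt (u * (1 - u))) / (1 - u)))
          + ∫ u in r..(1:ℝ),
            (r / u) ^ 2 * (2 * ((8 / Real.pi) * Real.sqrt (u * (1 - u))) / u) := by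
  rintro r ⟨hr0, hr1⟩
  have hleft : (fun u => ((1 - r) / (1 - u)) ^ 2 * (2 * ((8 / π) * √(u * (1 - u))) / (1 - u)))
      = fun u => 16 / π * (1 - r) ^ 2 * (√(u * (1 - u)) / (1 - u) ^ 3) := by
    funext u; simp only [div_eq_mul_inv, ← inv_pow]; ring
  have hright : (fun u => (r / u) ^ 2 * (2 * ((8 / π) * √(u * (1 - u))) / u))
      = fun u => 16 / π * r ^ 2 * (√(u * (1 - u)) / u ^ 3) := by
    funext u; simp only [div_eq_mul_inv, ← inv_pow]; ring
  rw [hleft, hright, integral_const_mul, integral_const_mul,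
    integral_sqrt_mul_one_sub_div_one_sub_pow_three hr0.le hr1,
    integral_sqrt_mul_one_sub_div_pow_three hr0 hr1.le]
  have hS : 0 < √r := sqrt_pos.2 hr0
  have hT : 0 < √(1 - r) := sqrt_pos.2 (sub_pos.2 hr1)
  have hS2 : √r ^ 2 = r := sq_sqrt hr0.le
  have hT2 : √(1 - r) ^ 2 = 1 - r := sq_sqrt (sub_pos.2 hr1).le
  rw [sqrt_mul hr0.le]
  set S := √r
  set T := √(1 - r)
  rw [← hT2, ← hS2]
  field_simp
  linear_combination (-32) * (hS2 + hT2)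
end

section
/- Suppose h: (0,1) → ℝ is three times continuously differentiable and satisfies (4/3)h(r) = ∫₀^r ((1−r)/(1−u))² · 2h(u)/(1−u) du + ∫_r^1 (r/u)² · 2h(u)/u du. Then (2/3) h'''(r) = h''(r)(1/(1−r) − 1/r) for all r ∈ (0,1). -/
/-!
Write the integral equation as `(4/3) h = (1 - r)² A + r² B` with `A = ∫₀ʳ 2h/(1-u)³` and
`B = ∫ᵣ¹ 2h/u³`. Since `A' = 2h/(1-r)³` and `B' = -2h/r³`, three differentiations eliminate
`A` and `B` and leave the ODE. The only subtlety is that Lean's integrals are `0` where the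
integrand is not integrable: if, say, `A` is junk, then `(4/3) h = r² B`, which forces
`h = c √r`; but then `2h/(1-u)³` is integrable near `0` after all (symmetrically for `B`).
-/

open intervalIntegral Set MeasureTheory

section IntervalIntegral

variable {E : Type*} [NormedAddCommGroup E] [NormedSpace ℝ E] [CompleteSpace E]
  {f : ℝ → E} {a b : ℝ}

theorem ContinuousOn.forall_hasDerivAt_integral_or_forall_not_intervalIntegrable_left
    (hf : ContinuousOn f (Ioo a b)) :
    (∀ r ∈ Ioo a b, HasDerivAt (fun t => ∫ u in a..t, f u) (f r) r) ∨
      ∀ r ∈ Ioo a b, ¬IntervalIntegrable f volume a r := by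
  by_cases H : ∃ s ∈ Ioo a b, IntervalIntegrable f volume a s
  · obtain ⟨s, hs, hfs⟩ := H
    refine Or.inl fun r hr => integral_hasDerivAt_right ?_
      (hf.stronglyMeasurableAtFilter isOpen_Ioo r hr) (hf.continuousAt (Ioo_mem_nhds hr.1 hr.2))
    exact hfs.trans (hf.mono (ordConnected_Ioo.uIcc_subset hs hr)).intervalIntegrable
  · push Not at H
    exact Or.inr H

theorem ContinuousOn.forall_hasDerivAt_integral_or_forall_not_intervalIntegrable_right
    (hf : ContinuousOn f (Ioo a b)) :
    (∀ r ∈ Ioo a b, HasDerivAt (fun t => ∫ u in t..b, f u) (-f r) r) ∨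
      ∀ r ∈ Ioo a b, ¬IntervalIntegrable f volume r b := by
  by_cases H : ∃ s ∈ Ioo a b, IntervalIntegrable f volume s b
  · obtain ⟨s, hs, hfs⟩ := H
    refine Or.inl fun r hr => integral_hasDerivAt_left ?_
      (hf.stronglyMeasurableAtFilter isOpen_Ioo r hr) (hf.continuousAt (Ioo_mem_nhds hr.1 hr.2))
    exact (hf.mono (ordConnected_Ioo.uIcc_subset hr hs)).intervalIntegrable.trans hfs
  · push Not at H
    exact Or.inr H

end IntervalIntegral

theorem HasDerivAt.unique_of_eqOn {𝕜 F : Type*} [NontriviallyNormedField 𝕜]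
    [NormedAddCommGroup F] [NormedSpace 𝕜 F] {f g : 𝕜 → F} {f' g' : F} {s : Set 𝕜} {x : 𝕜}
    (hf : HasDerivAt f f' x) (hs : IsOpen s) (hfg : EqOn f g s) (hx : x ∈ s)
    (hg : HasDerivAt g g' x) : f' = g' :=
  hf.unique (hg.congr_of_eventuallyEq (Filter.eventuallyEq_of_mem (hs.mem_nhds hx) hfg))

theorem exists_eq_mul_sqrt_of_hasDerivAt {h h' : ℝ → ℝ} {a b : ℝ} (ha : 0 ≤ a)
    (hd : ∀ r ∈ Ioo a b, HasDerivAt h (h' r) r) (hode : ∀ r ∈ Ioo a b, h' r = h r / (2 * r)) :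
    ∃ c, ∀ r ∈ Ioo a b, h r = c * √r := by
  have hq : ∀ r ∈ Ioo a b, HasDerivAt (fun z => h z / √z) 0 r := by
    intro r hr
    have hr0 : 0 < r := ha.trans_lt hr.1
    have hs : √r ≠ 0 := (Real.sqrt_pos.2 hr0).ne'
    refine ((hd r hr).div (Real.hasDerivAt_sqrt hr0.ne') hs).congr_deriv ?_
    rw [hode r hr]
    field_simp
    rw [Real.sq_sqrt hr0.le]
    ring
  obtain ⟨c, hc⟩ := isOpen_Ioo.exists_is_const_of_deriv_eq_zero isPreconnected_Ioo
    (fun r hr => (hq r hr).differentiableAt.differentiableWithinAt) (fun r hr => (hq r hr).deriv)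
  refine ⟨c, fun r hr => ?_⟩
  rw [← hc r hr, div_mul_cancel₀ _ (Real.sqrt_pos.2 (ha.trans_lt hr.1)).ne']

section MomentEquation

variable {h h' h'' h''' A B : ℝ → ℝ}

theorem moment_eq_first_deriv
    (hd1 : ∀ r ∈ Ioo (0:ℝ) 1, HasDerivAt h (h' r) r)
    (hA : ∀ r ∈ Ioo (0:ℝ) 1, HasDerivAt A (2 * h r / (1 - r) ^ 3) r)
    (hB : ∀ r ∈ Ioo (0:ℝ) 1, HasDerivAt B (-(2 * h r / r ^ 3)) r)
    (heq : ∀ r ∈ Ioo (0:ℝ) 1, 4 / 3 * h r = (1 - r) ^ 2 * A r + r ^ 2 * B r) :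
    ∀ r ∈ Ioo (0:ℝ) 1,
      4 / 3 * h' r = 2 * (r - 1) * A r + 2 * r * B r + 2 * h r / (1 - r) - 2 * h r / r := by
  intro r hr
  have hr0 : r ≠ 0 := hr.1.ne'
  have hr1 : 1 - r ≠ 0 := (sub_pos.2 hr.2).ne'
  rw [((hd1 r hr).const_mul (4 / 3)).unique_of_eqOn isOpen_Ioo (fun y hy => heq y hy) hr
    (((((hasDerivAt_id r).const_sub 1).pow 2).mul (hA r hr)).add
      ((hasDerivAt_pow 2 r).mul (hB r hr)))]
  simp only [id, Pi.pow_apply]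
  field_simp
  ring

theorem moment_eq_second_deriv
    (hd1 : ∀ r ∈ Ioo (0:ℝ) 1, HasDerivAt h (h' r) r)
    (hd2 : ∀ r ∈ Ioo (0:ℝ) 1, HasDerivAt h' (h'' r) r)
    (hA : ∀ r ∈ Ioo (0:ℝ) 1, HasDerivAt A (2 * h r / (1 - r) ^ 3) r)
    (hB : ∀ r ∈ Ioo (0:ℝ) 1, HasDerivAt B (-(2 * h r / r ^ 3)) r)
    (heq : ∀ r ∈ Ioo (0:ℝ) 1, 4 / 3 * h r = (1 - r) ^ 2 * A r + r ^ 2 * B r) :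
    ∀ r ∈ Ioo (0:ℝ) 1, 4 / 3 * h'' r = 2 * A r + 2 * B r - 2 * h r / (1 - r) ^ 2
      - 2 * h r / r ^ 2 + 2 * h' r / (1 - r) - 2 * h' r / r := by
  intro r hr
  have hr0 : r ≠ 0 := hr.1.ne'
  have hr1 : 1 - r ≠ 0 := (sub_pos.2 hr.2).ne'
  have hid := hasDerivAt_id r
  rw [((hd2 r hr).const_mul (4 / 3)).unique_of_eqOn isOpen_Ioo
    (fun y hy => moment_eq_first_deriv hd1 hA hB heq y hy) hr
    ((((((hid.sub_const 1).const_mul 2).mul (hA r hr)).add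
      ((hid.const_mul 2).mul (hB r hr))).add
      (((hd1 r hr).const_mul 2).div (hid.const_sub 1) hr1)).sub
      (((hd1 r hr).const_mul 2).div hid hr0))]
  simp only [id]
  field_simp
  ring

theorem moment_eq_third_deriv
    (hd1 : ∀ r ∈ Ioo (0:ℝ) 1, HasDerivAt h (h' r) r)
    (hd2 : ∀ r ∈ Ioo (0:ℝ) 1, HasDerivAt h' (h'' r) r)
    (hd3 : ∀ r ∈ Ioo (0:ℝ) 1, HasDerivAt h'' (h''' r) r)
    (hA : ∀ r ∈ Ioo (0:ℝ) 1, HasDerivAt A (2 * h r / (1 - r) ^ 3) r)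
    (hB : ∀ r ∈ Ioo (0:ℝ) 1, HasDerivAt B (-(2 * h r / r ^ 3)) r)
    (heq : ∀ r ∈ Ioo (0:ℝ) 1, 4 / 3 * h r = (1 - r) ^ 2 * A r + r ^ 2 * B r) :
    ∀ r ∈ Ioo (0:ℝ) 1, 2 / 3 * h''' r = h'' r * (1 / (1 - r) - 1 / r) := by
  intro r hr
  have hr0 : r ≠ 0 := hr.1.ne'
  have hr1 : 1 - r ≠ 0 := (sub_pos.2 hr.2).ne'
  have hid := hasDerivAt_id r
  have h2h := (hd1 r hr).const_mul 2
  have h2h' := (hd2 r hr).const_mul 2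
  have key : 4 / 3 * h''' r = 2 * h'' r * (1 / (1 - r) - 1 / r) := by
    rw [((hd3 r hr).const_mul (4 / 3)).unique_of_eqOn isOpen_Ioo
      (fun y hy => moment_eq_second_deriv hd1 hd2 hA hB heq y hy) hr
      (((((((hA r hr).const_mul 2).add ((hB r hr).const_mul 2)).sub
        (h2h.div ((hid.const_sub 1).pow 2) (pow_ne_zero 2 hr1))).sub
        (h2h.div (hasDerivAt_pow 2 r) (pow_ne_zero 2 hr0))).add
        (h2h'.div (hid.const_sub 1) hr1)).sub (h2h'.div hid hr0))]
    simp only [id, Pi.pow_apply]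
    field_simp
    ring
  linarith

theorem exists_eq_mul_sqrt_of_moment_eq_right
    (hd1 : ∀ r ∈ Ioo (0:ℝ) 1, HasDerivAt h (h' r) r)
    (hB : ∀ r ∈ Ioo (0:ℝ) 1, HasDerivAt B (-(2 * h r / r ^ 3)) r)
    (heq : ∀ r ∈ Ioo (0:ℝ) 1, 4 / 3 * h r = r ^ 2 * B r) :
    ∃ c, ∀ r ∈ Ioo (0:ℝ) 1, h r = c * √r := by
  refine exists_eq_mul_sqrt_of_hasDerivAt le_rfl hd1 fun r hr => ?_
  have hr0 : r ≠ 0 := hr.1.ne'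
  have hderiv := ((hd1 r hr).const_mul (4 / 3)).unique_of_eqOn isOpen_Ioo
    (fun y hy => heq y hy) hr ((hasDerivAt_pow 2 r).mul (hB r hr))
  have hBr : B r = 4 / 3 * h r / r ^ 2 := by
    rw [heq r hr]
    field_simp
  rw [hBr] at hderiv
  simp only [Nat.cast_ofNat, Nat.add_one_sub_one, pow_one] at hderiv
  field_simp at hderiv ⊢
  linarith

theorem exists_eq_mul_sqrt_one_sub_of_moment_eq_left
    (hd1 : ∀ r ∈ Ioo (0:ℝ) 1, HasDerivAt h (h' r) r)
    (hA : ∀ r ∈ Ioo (0:ℝ) 1, HasDerivAt A (2 * h r / (1 - r) ^ 3) r)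
    (heq : ∀ r ∈ Ioo (0:ℝ) 1, 4 / 3 * h r = (1 - r) ^ 2 * A r) :
    ∃ c, ∀ r ∈ Ioo (0:ℝ) 1, h r = c * √(1 - r) := by
  have hmem : ∀ r ∈ Ioo (0:ℝ) 1, 1 - r ∈ Ioo (0:ℝ) 1 :=
    fun r hr => ⟨by linarith [hr.2], by linarith [hr.1]⟩
  obtain ⟨c, hc⟩ := exists_eq_mul_sqrt_of_moment_eq_right (h := fun r => h (1 - r))
    (h' := fun r => -h' (1 - r)) (B := fun r => A (1 - r))
    (fun r hr => (hd1 _ (hmem r hr)).comp_const_sub 1 r)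
    (fun r hr => by simpa using (hA _ (hmem r hr)).comp_const_sub 1 r)
    (fun r hr => by simpa using heq _ (hmem r hr))
  exact ⟨c, fun r hr => by simpa using hc _ (hmem r hr)⟩

end MomentEquation

theorem intervalIntegrable_of_eq_mul_sqrt {h : ℝ → ℝ} {c : ℝ}
    (hc : ∀ r ∈ Ioo (0:ℝ) 1, h r = c * √r) :
    IntervalIntegrable (fun u => 2 * h u / (1 - u) ^ 3) volume 0 (1 / 2) := by
  rw [intervalIntegrable_congr_uIoo (g := fun u => 2 * (c * √u) / (1 - u) ^ 3) fun u hu => by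
    rw [uIoo_of_le (by norm_num)] at hu
    rw [hc u ⟨hu.1, hu.2.trans (by norm_num)⟩]]
  refine ContinuousOn.intervalIntegrable (ContinuousOn.div (by fun_prop) (by fun_prop) ?_)
  intro u hu
  rw [uIcc_of_le (by norm_num)] at hu
  exact pow_ne_zero 3 (by linarith [hu.2])

theorem intervalIntegrable_of_eq_mul_sqrt_one_sub {h : ℝ → ℝ} {c : ℝ}
    (hc : ∀ r ∈ Ioo (0:ℝ) 1, h r = c * √(1 - r)) :
    IntervalIntegrable (fun u => 2 * h u / u ^ 3) volume (1 / 2) 1 := by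
  rw [intervalIntegrable_congr_uIoo (g := fun u => 2 * (c * √(1 - u)) / u ^ 3) fun u hu => by
    rw [uIoo_of_le (by norm_num)] at hu
    rw [hc u ⟨(by norm_num : (0:ℝ) < 1 / 2).trans hu.1, hu.2⟩]]
  refine ContinuousOn.intervalIntegrable (ContinuousOn.div (by fun_prop) (by fun_prop) ?_)
  intro u hu
  rw [uIcc_of_le (by norm_num)] at hu
  exact pow_ne_zero 3 (by linarith [hu.1])

theorem ode_from_integral_equation_general
    (h h' h'' h''' : ℝ → ℝ)
    (hd1 : ∀ r ∈ Set.Ioo (0:ℝ) 1, HasDerivAt h (h' r) r)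
    (hd2 : ∀ r ∈ Set.Ioo (0:ℝ) 1, HasDerivAt h' (h'' r) r)
    (hd3 : ∀ r ∈ Set.Ioo (0:ℝ) 1, HasDerivAt h'' (h''' r) r)
    (heq : ∀ r ∈ Set.Ioo (0:ℝ) 1,
      (4 / 3) * h r
        = (∫ u in (0:ℝ)..r, ((1 - r) / (1 - u)) ^ 2 * (2 * h u / (1 - u)))
          + ∫ u in r..(1:ℝ), (r / u) ^ 2 * (2 * h u / u)) :
    ∀ r ∈ Set.Ioo (0:ℝ) 1,
      (2 / 3) * h''' r = h'' r * (1 / (1 - r) - 1 / r) := by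
  set g : ℝ → ℝ := fun u => 2 * h u / (1 - u) ^ 3
  set k : ℝ → ℝ := fun u => 2 * h u / u ^ 3
  have hmoment : ∀ r ∈ Ioo (0:ℝ) 1,
      4 / 3 * h r = (1 - r) ^ 2 * (∫ u in (0:ℝ)..r, g u) + r ^ 2 * ∫ u in r..(1:ℝ), k u := by
    intro r hr
    rw [heq r hr, ← intervalIntegral.integral_const_mul, ← intervalIntegral.integral_const_mul]
    congr 1 <;> congr 1 <;> funext u <;>
      simp only [g, k, div_eq_mul_inv, mul_pow, ← inv_pow] <;> ring
  have hh : ContinuousOn h (Ioo 0 1) := fun r hr => (hd1 r hr).continuousAt.continuousWithinAt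
  have hg : ContinuousOn g (Ioo 0 1) :=
    (continuousOn_const.mul hh).div (by fun_prop) fun r hr => pow_ne_zero 3 (sub_pos.2 hr.2).ne'
  have hk : ContinuousOn k (Ioo 0 1) :=
    (continuousOn_const.mul hh).div (by fun_prop) fun r hr => pow_ne_zero 3 hr.1.ne'
  have half_mem : (1 / 2 : ℝ) ∈ Ioo 0 1 := by norm_num
  rcases hg.forall_hasDerivAt_integral_or_forall_not_intervalIntegrable_left with hA | hA <;>
    rcases hk.forall_hasDerivAt_integral_or_forall_not_intervalIntegrable_right with hB | hB
  · exact moment_eq_third_deriv hd1 hd2 hd3 hA hB hmoment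
  · obtain ⟨c, hc⟩ := exists_eq_mul_sqrt_one_sub_of_moment_eq_left hd1 hA fun r hr => by
      simpa [integral_undef (hB r hr)] using hmoment r hr
    exact absurd (intervalIntegrable_of_eq_mul_sqrt_one_sub hc) (hB _ half_mem)
  · obtain ⟨c, hc⟩ := exists_eq_mul_sqrt_of_moment_eq_right hd1 hB fun r hr => by
      simpa [integral_undef (hA r hr)] using hmoment r hr
    exact absurd (intervalIntegrable_of_eq_mul_sqrt hc) (hA _ half_mem)
  · have hzero : ∀ r ∈ Ioo (0:ℝ) 1, h r = 0 * √r := fun r hr => by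
      simpa [integral_undef (hA r hr), integral_undef (hB r hr)] using hmoment r hr
    exact absurd (intervalIntegrable_of_eq_mul_sqrt hzero) (hA _ half_mem)

/-- If `h` is three times (continuously) differentiable on `(0,1)` and solves
the first-moment integral equation, then `(2/3)h'''(r) = h''(r)(1/(1−r) − 1/r)`
on `(0,1)`. -/
theorem ode_from_integral_equation
    (h h' h'' h''' : ℝ → ℝ)
    (hd1 : ∀ r ∈ Set.Ioo (0:ℝ) 1, HasDerivAt h (h' r) r)
    (hd2 : ∀ r ∈ Set.Ioo (0:ℝ) 1, HasDerivAt h' (h'' r) r)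
    (hd3 : ∀ r ∈ Set.Ioo (0:ℝ) 1, HasDerivAt h'' (h''' r) r)
    (hc : ContinuousOn h''' (Set.Ioo (0:ℝ) 1))
    (heq : ∀ r ∈ Set.Ioo (0:ℝ) 1,
      (4 / 3) * h r
        = (∫ u in (0:ℝ)..r, ((1 - r) / (1 - u)) ^ 2 * (2 * h u / (1 - u)))
          + ∫ u in r..(1:ℝ), (r / u) ^ 2 * (2 * h u / u)) :
    ∀ r ∈ Set.Ioo (0:ℝ) 1,
      (2 / 3) * h''' r = h'' r * (1 / (1 - r) - 1 / r) :=
  ode_from_integral_equation_general h h' h'' h''' hd1 hd2 hd3 heq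
end

section
/- Let S be a finite collection of pairwise noncrossing chords of the unit circle (a figela) and let Feet(S) be the set of endpoints of its chords. For x,y ∈ S¹ \ Feet(S) let H_S(x,y) be the number of chords of S meeting the chord [xy]. Then for all x,y,z ∈ S¹ \ Feet(S): H_S(x,z) ≤ H_S(x,y) + H_S(y,z). -/
/-!
A chord `[ab]` of the circle meets a chord `[uv]` with `u, v ∉ {a, b}` exactly when `u` and `v`
lie strictly on opposite sides of the line `ab`: the line meets the closed disc in `[ab]`, and
meets the circle only at `a` and `b`. Since `y` is not on the line either, a chord separating `x`
from `z` separates `y` from one of them, so every chord counted by `H_S(x,z)` is counted by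
`H_S(x,y)` or by `H_S(y,z)`.
-/

/-- The height `H_S(x,y)`: the number of chords of the figela `S` whose
(closed) segment meets the segment `[xy]`. -/
noncomputable def figelaHeight (S : Finset (ℂ × ℂ)) (x y : ℂ) : ℕ :=
  {c : ℂ × ℂ | c ∈ S ∧ (segment ℝ c.1 c.2 ∩ segment ℝ x y).Nonempty}.ncard

open Set Metric

theorem norm_add_smul_sub_sq {F : Type*} [NormedAddCommGroup F] [InnerProductSpace ℝ F]
    (a b : F) (t : ℝ) :
    ‖a + t • (b - a)‖ ^ 2 = (1 - t) * ‖a‖ ^ 2 + t * ‖b‖ ^ 2 - t * (1 - t) * ‖b - a‖ ^ 2 := by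
  rw [norm_add_sq_real, norm_smul, inner_smul_right, inner_sub_right, real_inner_self_eq_norm_sq,
    Real.norm_eq_abs, mul_pow, sq_abs, norm_sub_sq_real b a, real_inner_comm]
  ring

theorem mem_segment_of_norm_add_smul_sub_le {F : Type*} [NormedAddCommGroup F]
    [InnerProductSpace ℝ F] {a b : F} {r t : ℝ} (ha : ‖a‖ = r) (hb : ‖b‖ = r) (hab : a ≠ b)
    (ht : ‖a + t • (b - a)‖ ≤ r) : a + t • (b - a) ∈ segment ℝ a b := by
  have hba : 0 < ‖b - a‖ ^ 2 := by positivity [sub_ne_zero.mpr hab.symm]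
  have ht01 : 0 ≤ t * (1 - t) := by
    have hsq := norm_add_smul_sub_sq a b t
    rw [ha, hb] at hsq
    refine nonneg_of_mul_nonneg_left ?_ hba
    nlinarith [norm_nonneg (a + t • (b - a))]
  rw [segment_eq_image']
  exact ⟨t, ⟨by nlinarith, by nlinarith⟩, rfl⟩

/-- Positive, negative or zero according as `w` lies to the left of, to the right of, or on the
line through `a` and `b`; identically zero when `a = b`, where the division is by `0`. -/
noncomputable def lineSide (a b : ℂ) : ℂ →ᵃ[ℝ] ℝ where
  toFun w := ((w - a) / (b - a)).im
  linear := Complex.imLm ∘ₗ LinearMap.mulRight ℝ (b - a)⁻¹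
  map_vadd' p v := by
    simp only [vadd_eq_add, LinearMap.coe_comp, Function.comp_apply, LinearMap.mulRight_apply,
      Complex.imLm_coe, ← Complex.add_im, div_eq_mul_inv]
    congr 1
    ring

theorem lineSide_apply (a b w : ℂ) : lineSide a b w = ((w - a) / (b - a)).im := rfl

theorem lineSide_eq_zero_of_mem_segment {a b p : ℂ} (hab : a ≠ b) (hp : p ∈ segment ℝ a b) :
    lineSide a b p = 0 := by
  have hfa : lineSide a b a = 0 := by simp [lineSide_apply]
  have hfb : lineSide a b b = 0 := by simp [lineSide_apply, div_self (sub_ne_zero.mpr hab.symm)]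
  have := mem_image_of_mem (lineSide a b) hp
  rwa [image_segment, hfa, hfb, segment_same, mem_singleton_iff] at this

theorem exists_eq_add_smul_of_lineSide_eq_zero {a b w : ℂ} (hab : a ≠ b)
    (hw : lineSide a b w = 0) : ∃ t : ℝ, w = a + t • (b - a) := by
  refine ⟨((w - a) / (b - a)).re, ?_⟩
  have hreal : (((w - a) / (b - a)).re : ℂ) = (w - a) / (b - a) :=
    Complex.ext rfl (by simpa [lineSide_apply] using hw.symm)
  rw [Complex.real_smul, hreal, div_mul_cancel₀ _ (sub_ne_zero.mpr hab.symm)]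
  ring

theorem mem_segment_of_lineSide_eq_zero {a b w : ℂ} {r : ℝ} (ha : a ∈ sphere (0 : ℂ) r)
    (hb : b ∈ sphere (0 : ℂ) r) (hab : a ≠ b) (hw : w ∈ closedBall (0 : ℂ) r)
    (h0 : lineSide a b w = 0) : w ∈ segment ℝ a b := by
  obtain ⟨t, rfl⟩ := exists_eq_add_smul_of_lineSide_eq_zero hab h0
  rw [mem_sphere_zero_iff_norm] at ha hb
  exact mem_segment_of_norm_add_smul_sub_le ha hb hab (mem_closedBall_zero_iff.mp hw)

theorem lineSide_ne_zero {a b w : ℂ} {r : ℝ} (ha : a ∈ sphere (0 : ℂ) r)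
    (hb : b ∈ sphere (0 : ℂ) r) (hab : a ≠ b) (hw : w ∈ sphere (0 : ℂ) r)
    (hwab : w ≠ a ∧ w ≠ b) : lineSide a b w ≠ 0 := by
  intro h0
  have hseg := mem_segment_of_lineSide_eq_zero ha hb hab (sphere_subset_closedBall hw) h0
  have hball := openSegment_subset_ball_of_ne (sphere_subset_closedBall ha)
    (sphere_subset_closedBall hb) hab
    (mem_openSegment_of_ne_left_right hwab.1.symm hwab.2.symm hseg)
  exact (mem_ball_zero_iff.mp hball).ne (mem_sphere_zero_iff_norm.mp hw)

theorem zero_mem_segment_iff_mul_neg {α β : ℝ} (hα : α ≠ 0) (hβ : β ≠ 0) :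
    (0 : ℝ) ∈ segment ℝ α β ↔ α * β < 0 := by
  rw [segment_eq_uIcc, mem_uIcc]
  constructor
  · rintro (⟨h₁, h₂⟩ | ⟨h₁, h₂⟩)
    · exact mul_neg_of_neg_of_pos (lt_of_le_of_ne h₁ hα) (lt_of_le_of_ne' h₂ hβ)
    · exact mul_neg_of_pos_of_neg (lt_of_le_of_ne' h₂ hα) (lt_of_le_of_ne h₁ hβ)
  · intro h
    rcases mul_neg_iff.mp h with ⟨h₁, h₂⟩ | ⟨h₁, h₂⟩
    · exact Or.inr ⟨h₂.le, h₁.le⟩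
    · exact Or.inl ⟨h₁.le, h₂.le⟩

theorem segment_inter_segment_nonempty_iff {a b u v : ℂ} {r : ℝ} (ha : a ∈ sphere (0 : ℂ) r)
    (hb : b ∈ sphere (0 : ℂ) r) (hab : a ≠ b) (hu : u ∈ sphere (0 : ℂ) r)
    (hv : v ∈ sphere (0 : ℂ) r) (huab : u ≠ a ∧ u ≠ b) (hvab : v ≠ a ∧ v ≠ b) :
    (segment ℝ a b ∩ segment ℝ u v).Nonempty ↔ lineSide a b u * lineSide a b v < 0 := by
  rw [← zero_mem_segment_iff_mul_neg (lineSide_ne_zero ha hb hab hu huab)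
    (lineSide_ne_zero ha hb hab hv hvab), ← image_segment]
  constructor
  · rintro ⟨p, hpab, hpuv⟩
    exact ⟨p, hpuv, lineSide_eq_zero_of_mem_segment hab hpab⟩
  · rintro ⟨q, hquv, hq⟩
    have hq_ball : q ∈ closedBall (0 : ℂ) r := (convex_closedBall 0 r).segment_subset
      (sphere_subset_closedBall hu) (sphere_subset_closedBall hv) hquv
    exact ⟨q, mem_segment_of_lineSide_eq_zero ha hb hab hq_ball hq, hquv⟩

theorem mul_neg_or_mul_neg_of_mul_neg {α β γ : ℝ} (hαγ : α * γ < 0) (hβ : β ≠ 0) :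
    α * β < 0 ∨ β * γ < 0 := by
  by_contra! h
  nlinarith [mul_nonneg h.1 h.2, mul_neg_of_neg_of_pos hαγ (pow_pos (abs_pos.mpr hβ) 2), sq_abs β]

theorem segment_inter_nonempty_left_or_right {a b x y z : ℂ} {r : ℝ}
    (ha : a ∈ sphere (0 : ℂ) r) (hb : b ∈ sphere (0 : ℂ) r) (hab : a ≠ b)
    (hx : x ∈ sphere (0 : ℂ) r) (hy : y ∈ sphere (0 : ℂ) r) (hz : z ∈ sphere (0 : ℂ) r)
    (hxab : x ≠ a ∧ x ≠ b) (hyab : y ≠ a ∧ y ≠ b) (hzab : z ≠ a ∧ z ≠ b)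
    (hxz : (segment ℝ a b ∩ segment ℝ x z).Nonempty) :
    (segment ℝ a b ∩ segment ℝ x y).Nonempty ∨ (segment ℝ a b ∩ segment ℝ y z).Nonempty := by
  rw [segment_inter_segment_nonempty_iff ha hb hab hx hz hxab hzab] at hxz
  rw [segment_inter_segment_nonempty_iff ha hb hab hx hy hxab hyab,
    segment_inter_segment_nonempty_iff ha hb hab hy hz hyab hzab]
  exact mul_neg_or_mul_neg_of_mul_neg hxz (lineSide_ne_zero ha hb hab hy hyab)

theorem figelaHeight_triangle_general
    (S : Finset (ℂ × ℂ))
    (hfeet : ∀ c ∈ S, c.1 ∈ Metric.sphere (0:ℂ) 1 ∧ c.2 ∈ Metric.sphere (0:ℂ) 1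
      ∧ c.1 ≠ c.2)
    (x y z : ℂ)
    (hx : x ∈ Metric.sphere (0:ℂ) 1) (hy : y ∈ Metric.sphere (0:ℂ) 1)
    (hz : z ∈ Metric.sphere (0:ℂ) 1)
    (hxS : ∀ c ∈ S, x ≠ c.1 ∧ x ≠ c.2)
    (hyS : ∀ c ∈ S, y ≠ c.1 ∧ y ≠ c.2)
    (hzS : ∀ c ∈ S, z ≠ c.1 ∧ z ≠ c.2) :
    figelaHeight S x z ≤ figelaHeight S x y + figelaHeight S y z := by
  set meets := fun u v ↦ {c : ℂ × ℂ | c ∈ S ∧ (segment ℝ c.1 c.2 ∩ segment ℝ u v).Nonempty}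
  have hsub : meets x z ⊆ meets x y ∪ meets y z := by
    rintro c ⟨hcS, hc⟩
    obtain ⟨h₁, h₂, h₁₂⟩ := hfeet c hcS
    exact (segment_inter_nonempty_left_or_right h₁ h₂ h₁₂ hx hy hz (hxS c hcS) (hyS c hcS)
      (hzS c hcS) hc).imp (⟨hcS, ·⟩) (⟨hcS, ·⟩)
  have hfin : (meets x y ∪ meets y z).Finite :=
    S.finite_toSet.subset (union_subset (fun _ hc ↦ hc.1) (fun _ hc ↦ hc.1))
  calc figelaHeight S x z ≤ (meets x y ∪ meets y z).ncard := ncard_le_ncard hsub hfin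
    _ ≤ figelaHeight S x y + figelaHeight S y z := ncard_union_le _ _

/-- Triangle inequality for the height of a figela: for a finite collection of
pairwise noncrossing chords of the unit circle and points `x, y, z` of the
circle which are not feet of `S`, `H_S(x,z) ≤ H_S(x,y) + H_S(y,z)`. -/
theorem figelaHeight_triangle
    (S : Finset (ℂ × ℂ))
    (hfeet : ∀ c ∈ S, c.1 ∈ Metric.sphere (0:ℂ) 1 ∧ c.2 ∈ Metric.sphere (0:ℂ) 1
      ∧ c.1 ≠ c.2)
    (hcross : ∀ c ∈ S, ∀ d ∈ S, c ≠ d →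
      openSegment ℝ c.1 c.2 ∩ openSegment ℝ d.1 d.2 = ∅)
    (x y z : ℂ)
    (hx : x ∈ Metric.sphere (0:ℂ) 1) (hy : y ∈ Metric.sphere (0:ℂ) 1)
    (hz : z ∈ Metric.sphere (0:ℂ) 1)
    (hxS : ∀ c ∈ S, x ≠ c.1 ∧ x ≠ c.2)
    (hyS : ∀ c ∈ S, y ≠ c.1 ∧ y ≠ c.2)
    (hzS : ∀ c ∈ S, z ≠ c.1 ∧ z ≠ c.2) :
    figelaHeight S x z ≤ figelaHeight S x y + figelaHeight S y z :=
  figelaHeight_triangle_general S hfeet x y z hx hy hz hxS hyS hzS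
end

section
/- Let U, X₁, X₂ be independent uniform on [0,1]. The probability that X₁ and X₂ lie on opposite sides of U equals 1/3, and conditionally on this event the larger of the two lengths U ∨ (1−U) has density 12 m (1−m) on [1/2, 1]. -/
open MeasureTheory

/-- The law of `(U, X₁, X₂)`: three independent uniform variables on `[0,1]`. -/
noncomputable def cubeMeasure : Measure (ℝ × ℝ × ℝ) :=
  (volume.restrict (Set.Icc (0:ℝ) 1)).prod
    ((volume.restrict (Set.Icc (0:ℝ) 1)).prod (volume.restrict (Set.Icc (0:ℝ) 1)))

/-- The event that `X₁` and `X₂` lie on opposite sides of `U`. -/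
def oppositeSides : Set (ℝ × ℝ × ℝ) :=
  {p | (p.2.1 < p.1 ∧ p.1 < p.2.2) ∨ (p.2.2 < p.1 ∧ p.1 < p.2.1)}

/-!
Conditioning on `U = u`, the pair `(X₁, X₂)` is split by `u` with probability `2u(1-u)`, so the
law of `U` restricted to `oppositeSides` has density `2u(1-u)` on `[0,1]`; its total mass is
`1/3`. The event `max U (1-U) ∈ [a,b]` is `U ∈ [1-b,1-a] ∪ [a,b]`, and the density is invariant
under `u ↦ 1-u`, so the mass of that event is `2 ∫_a^b 2m(1-m) dm = (1/3) ∫_a^b 12m(1-m) dm`.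
-/

open Set

local notation "unif" => volume.restrict (Icc (0:ℝ) 1)

lemma measurableSet_oppositeSides : MeasurableSet oppositeSides :=
  ((measurableSet_lt (measurable_fst.comp measurable_snd) measurable_fst).inter
      (measurableSet_lt measurable_fst (measurable_snd.comp measurable_snd))).union
    ((measurableSet_lt (measurable_snd.comp measurable_snd) measurable_fst).inter
      (measurableSet_lt measurable_fst (measurable_fst.comp measurable_snd)))

lemma unif_Iio {u : ℝ} (hu : u ≤ 1) : unif (Iio u) = ENNReal.ofReal u := by
  rw [Measure.restrict_apply measurableSet_Iio,
    show Iio u ∩ Icc 0 1 = Ico 0 u by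
      ext x; simp only [mem_inter_iff, mem_Iio, mem_Icc, mem_Ico]; grind,
    Real.volume_Ico, sub_zero]

lemma unif_Ioi {u : ℝ} (hu : 0 ≤ u) : unif (Ioi u) = ENNReal.ofReal (1 - u) := by
  rw [Measure.restrict_apply measurableSet_Ioi,
    show Ioi u ∩ Icc 0 1 = Ioc u 1 by
      ext x; simp only [mem_inter_iff, mem_Ioi, mem_Icc, mem_Ioc]; grind,
    Real.volume_Ioc]

lemma preimage_mk_oppositeSides (u : ℝ) :
    Prod.mk u ⁻¹' oppositeSides = Iio u ×ˢ Ioi u ∪ Ioi u ×ˢ Iio u := by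
  ext ⟨x, y⟩
  simp [oppositeSides, and_comm]

lemma unif_prod_preimage_mk_oppositeSides {u : ℝ} (hu : u ∈ Icc (0:ℝ) 1) :
    (Measure.prod unif unif) (Prod.mk u ⁻¹' oppositeSides) = ENNReal.ofReal (2 * u * (1 - u)) := by
  obtain ⟨hu0, hu1⟩ := hu
  have hdisj : Disjoint (Iio u ×ˢ Ioi u) (Ioi u ×ˢ Iio u) :=
    disjoint_prod.2 (Or.inl Ioi_disjoint_Iio_same.symm)
  rw [preimage_mk_oppositeSides, measure_union hdisj (measurableSet_Ioi.prod measurableSet_Iio),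
    Measure.prod_prod, Measure.prod_prod, unif_Iio hu1, unif_Ioi hu0,
    ← ENNReal.ofReal_mul hu0, ← ENNReal.ofReal_mul (by linarith),
    ← ENNReal.ofReal_add (by positivity) (by nlinarith)]
  ring_nf

lemma cubeMeasure_oppositeSides_inter_fst_preimage {T : Set ℝ} (hT : MeasurableSet T) :
    cubeMeasure (oppositeSides ∩ Prod.fst ⁻¹' T)
      = ∫⁻ u in T ∩ Icc 0 1, ENNReal.ofReal (2 * u * (1 - u)) := by
  have hslice : ∀ u ∈ Icc (0:ℝ) 1,
      (Measure.prod unif unif) (Prod.mk u ⁻¹' (oppositeSides ∩ Prod.fst ⁻¹' T))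
        = T.indicator (fun u => ENNReal.ofReal (2 * u * (1 - u))) u := by
    intro u hu
    by_cases huT : u ∈ T
    · rw [indicator_of_mem huT, ← unif_prod_preimage_mk_oppositeSides hu]
      congr 1
      ext q
      simp [huT]
    · rw [indicator_of_notMem huT, measure_eq_zero_iff_ae_notMem]
      simp [huT]
  rw [cubeMeasure, Measure.prod_apply (measurableSet_oppositeSides.inter (measurable_fst hT)),
    setLIntegral_congr_fun measurableSet_Icc hslice, lintegral_indicator hT,
    Measure.restrict_restrict hT]

lemma setLIntegral_Icc_ofReal_eq_intervalIntegral {f : ℝ → ℝ} {c d : ℝ} (hcd : c ≤ d)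
    (hf : Continuous f) (hf_nonneg : ∀ x ∈ Icc c d, 0 ≤ f x) :
    ∫⁻ x in Icc c d, ENNReal.ofReal (f x) = ENNReal.ofReal (∫ x in c..d, f x) := by
  rw [intervalIntegral.integral_of_le hcd, ← integral_Icc_eq_integral_Ioc,
    ofReal_integral_eq_lintegral_ofReal hf.integrableOn_Icc
      ((ae_restrict_iff' measurableSet_Icc).2 (Filter.Eventually.of_forall hf_nonneg))]

lemma setOf_max_one_sub_mem_Icc_inter_Icc {a b : ℝ} (ha : 1 / 2 ≤ a) (hb : b ≤ 1) :
    {u : ℝ | max u (1 - u) ∈ Icc a b} ∩ Icc 0 1 = Icc (1 - b) (1 - a) ∪ Icc a b := by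
  ext u
  simp only [mem_inter_iff, mem_ofPred_eq, mem_Icc, mem_union]
  grind

lemma integral_two_mul_one_sub_reflect (a b : ℝ) :
    ∫ u in 1 - b..1 - a, 2 * u * (1 - u) = ∫ u in a..b, 2 * u * (1 - u) := by
  rw [← intervalIntegral.integral_comp_sub_left (fun u => 2 * u * (1 - u))]
  congr 1
  ext u
  ring

lemma integral_two_mul_one_sub_unit : ∫ u in (0:ℝ)..1, 2 * u * (1 - u) = 1 / 3 := by
  simp_rw [show ∀ u : ℝ, 2 * u * (1 - u) = 2 * (u - u ^ 2) by intro u; ring]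
  rw [intervalIntegral.integral_const_mul, intervalIntegral.integral_sub (by simp) (by simp)]
  norm_num [integral_pow, integral_id]

lemma setLIntegral_Icc_two_mul_one_sub {c d : ℝ} (hc : 0 ≤ c) (hcd : c ≤ d) (hd : d ≤ 1) :
    ∫⁻ u in Icc c d, ENNReal.ofReal (2 * u * (1 - u))
      = ENNReal.ofReal (∫ u in c..d, 2 * u * (1 - u)) :=
  setLIntegral_Icc_ofReal_eq_intervalIntegral hcd (by fun_prop)
    fun u hu => by nlinarith [hu.1, hu.2]

lemma cubeMeasure_oppositeSides : cubeMeasure oppositeSides = ENNReal.ofReal (1 / 3) := by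
  have h := cubeMeasure_oppositeSides_inter_fst_preimage MeasurableSet.univ
  rw [preimage_univ, inter_univ, univ_inter] at h
  rw [h, setLIntegral_Icc_two_mul_one_sub le_rfl zero_le_one le_rfl,
    integral_two_mul_one_sub_unit]

lemma cubeMeasure_oppositeSides_inter_max_mem_Icc {a b : ℝ} (ha : 1 / 2 ≤ a) (hab : a ≤ b)
    (hb : b ≤ 1) :
    cubeMeasure (oppositeSides ∩ {p | max p.1 (1 - p.1) ∈ Icc a b})
      = ENNReal.ofReal (2 * ∫ u in a..b, 2 * u * (1 - u)) := by
  have hT : MeasurableSet {u : ℝ | max u (1 - u) ∈ Icc a b} :=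
    (measurable_id.max (measurable_const.sub measurable_id)) measurableSet_Icc
  have hnull : AEDisjoint volume (Icc (1 - b) (1 - a)) (Icc a b) :=
    measure_mono_null (fun u hu => by simp only [mem_inter_iff, mem_Icc] at hu; grind)
      (Real.volume_singleton (a := a))
  have hI : 0 ≤ ∫ u in a..b, 2 * u * (1 - u) :=
    intervalIntegral.integral_nonneg hab fun u hu => by nlinarith [hu.1, hu.2]
  change cubeMeasure (oppositeSides ∩ Prod.fst ⁻¹' {u : ℝ | max u (1 - u) ∈ Icc a b}) = _
  rw [cubeMeasure_oppositeSides_inter_fst_preimage hT, setOf_max_one_sub_mem_Icc_inter_Icc ha hb,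
    Measure.restrict_union₀ hnull measurableSet_Icc.nullMeasurableSet, lintegral_add_measure,
    setLIntegral_Icc_two_mul_one_sub (by linarith) (by linarith) (by linarith),
    setLIntegral_Icc_two_mul_one_sub (by linarith) hab hb,
    integral_two_mul_one_sub_reflect, two_mul, ENNReal.ofReal_add hI hI]

/-- With probability `1/3`, `X₁` and `X₂` fall on opposite sides of `U`;
conditionally on this event, the larger length `U ∨ (1−U)` has density
`12m(1−m)` on `[1/2,1]`. -/
theorem oppositeSides_prob_and_density :
    cubeMeasure oppositeSides = ENNReal.ofReal (1 / 3) ∧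
    ∀ a b : ℝ, 1 / 2 ≤ a → a ≤ b → b ≤ 1 →
      cubeMeasure (oppositeSides ∩ {p | max p.1 (1 - p.1) ∈ Set.Icc a b})
        = ENNReal.ofReal ((1 / 3) * ∫ m in a..b, 12 * m * (1 - m)) := by
  refine ⟨cubeMeasure_oppositeSides, fun a b ha hab hb => ?_⟩
  rw [cubeMeasure_oppositeSides_inter_max_mem_Icc ha hab hb]
  simp_rw [show ∀ m : ℝ, 12 * m * (1 - m) = 6 * (2 * m * (1 - m)) by intro m; ring]
  rw [intervalIntegral.integral_const_mul]
  congr 1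
  ring
end
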